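/- arXiv:2410.11303 — 8 statements merged into one kernel-verified Lean document; each statement's English description precedes it below -/
import Mathlib

section
/- Assume N > 1 and α < 1, and let the regularizer be G∞. Let K = max{k ∈ [N] : (α/C)·Σ_{i=1}^{M} Σ_{l=1}^{k−1} (d_{i j_k^i} − d_{i j_l^i}) < (1−α)·M} (this set contains k = 1 since α < 1, so K is well defined). Define γ* ∈ ℝ^{M×N} by γ*_{ij} = 1/(K·M) if j ∈ {j_1^i, …, j_K^i} and γ*_{ij} = 0 otherwise. If K ≤ N/2, then γ* is feasible and L(γ*) ≤ L(γ) for every feasible γ ∈ ℝ^{M×N}. -/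
open Finset

lemma ite_sum_eq (N m : ℕ) (hm : m ≤ N) (F : ℕ → ℝ) :
    ∑ n ∈ Finset.range N, (if n < m then F n else 0) = ∑ n ∈ Finset.range m, F n := by
  have h := Finset.sum_range_add_sum_Ico (fun n => if n < m then F n else 0) hm
  have h1 : ∑ n ∈ Finset.range m, (if n < m then F n else 0) = ∑ n ∈ Finset.range m, F n :=
    Finset.sum_congr rfl (fun n hn => if_pos (Finset.mem_range.1 hn))
  have h2 : ∑ n ∈ Finset.Ico m N, (if n < m then F n else 0) = 0 :=
    Finset.sum_eq_zero (fun n hn => if_neg (by simpa using not_lt.mpr (Finset.mem_Ico.1 hn).1))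
  rw [← h, h1, h2, add_zero]

lemma row_lb {N : ℕ} (e g : Fin N → ℝ) (he : Monotone e)
    (hg0 : ∀ l, 0 ≤ g l) (u : ℝ) (hgu : ∀ l, g l ≤ u) (m : Fin N) :
    (∑ l : Fin N, if (l : ℕ) < (m : ℕ) then u * (e l - e m) else 0) + (∑ l, g l) * e m
      ≤ ∑ l, g l * e l := by
  rw [Finset.sum_mul, ← Finset.sum_add_distrib]
  apply Finset.sum_le_sum
  intro l _
  by_cases h : (l : ℕ) < (m : ℕ)
  · rw [if_pos h]
    have h1 : e l ≤ e m := he (Fin.le_def.mpr h.le)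
    nlinarith [mul_nonneg (sub_nonneg.2 (hgu l)) (sub_nonneg.2 h1)]
  · rw [if_neg h]
    have h1 : e m ≤ e l := he (Fin.le_def.mpr (not_lt.1 h))
    nlinarith [mul_le_mul_of_nonneg_left h1 (hg0 l)]


/-- Theorem 1 (optimality part): with the `G∞` regularizer, transporting each query
example's mass uniformly to its `K` nearest neighbors is an optimal solution. -/
theorem stmt_0 (M N : ℕ) (hM : 1 ≤ M) (hN : 1 < N)
    (d : Fin M → Fin N → ℝ) (hd : ∀ i j, 0 ≤ d i j)
    (C α : ℝ) (hC : 0 < C) (hα0 : 0 ≤ α) (hα1 : α < 1)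
    -- `σ i` sorts the candidates by distance to query `i` : `σ i k` is the (k+1)-st nearest
    (σ : Fin M → Equiv.Perm (Fin N))
    (hsort : ∀ i, Monotone fun k => d i (σ i k))
    -- `D i l` is the distance from query `i` to its (l+1)-st nearest candidate
    (D : Fin M → ℕ → ℝ) (hD : ∀ i (l : Fin N), D i (l : ℕ) = d i (σ i l))
    -- `K` is the largest `k ∈ [N]` satisfying the trade-off condition
    (K : ℕ) (hK1 : 1 ≤ K) (hK2 : K ≤ N)
    (hKcond : (α / C) * (∑ i, ∑ l ∈ Finset.range (K - 1), (D i (K - 1) - D i l))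
      < (1 - α) * (M : ℝ))
    (hKmax : ∀ k, 1 ≤ k → k ≤ N →
      (α / C) * (∑ i, ∑ l ∈ Finset.range (k - 1), (D i (k - 1) - D i l)) < (1 - α) * (M : ℝ) →
      k ≤ K)
    (hKN : (K : ℝ) ≤ (N : ℝ) / 2)
    -- `γstar` puts mass `1/(K·M)` on the `K` nearest neighbors of each query example
    (γstar : Fin M → Fin N → ℝ)
    (hγstar : ∀ i j, γstar i j = if (((σ i).symm j : Fin N) : ℕ) < K then 1 / ((K : ℝ) * M) else 0)
    -- the objective with regularizer `G∞`
    (L : (Fin M → Fin N → ℝ) → ℝ)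
    (hL : ∀ γ, L γ = (α / C) * (∑ i, ∑ j, γ i j * d i j)
      + (1 - α) * ((M : ℝ) * ⨆ i, ⨆ j, |γ i j - 1 / ((M : ℝ) * N)|)) :
    ((∀ i j, 0 ≤ γstar i j) ∧ (∀ i, ∑ j, γstar i j = 1 / (M : ℝ))) ∧
      ∀ γ : Fin M → Fin N → ℝ,
        ((∀ i j, 0 ≤ γ i j) ∧ (∀ i, ∑ j, γ i j = 1 / (M : ℝ))) → L γstar ≤ L γ := by
  haveI : NeZero M := ⟨by omega⟩
  haveI : NeZero N := ⟨by omega⟩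
  have hM0 : (0:ℝ) < M := by exact_mod_cast Nat.pos_of_ne_zero (by omega)
  have hN0 : (0:ℝ) < N := by exact_mod_cast Nat.pos_of_ne_zero (by omega)
  have hK0 : (0:ℝ) < K := by exact_mod_cast hK1
  have hKM : (0:ℝ) < (K:ℝ) * M := by positivity
  have hMN : (0:ℝ) < (M:ℝ) * N := by positivity
  have hKR : (K:ℝ) ≤ N := by exact_mod_cast hK2
  have hKltN : K < N := by
    have h2 : (2:ℝ) * K ≤ N := by linarith
    have : 2 * K ≤ N := by exact_mod_cast h2
    omega
  set c : ℝ := 1 / ((M:ℝ) * N) with hc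
  set v : ℝ := 1 / ((K:ℝ) * M) with hv
  have hc0 : 0 < c := by positivity
  have hcv : c ≤ v := by
    rw [hc, hv]
    apply one_div_le_one_div_of_le hKM
    nlinarith
  have h2c : 2 * c ≤ v := by
    rw [hc, hv]
    rw [show (2:ℝ) * (1 / ((M:ℝ)*N)) = 2 / ((M:ℝ)*N) by ring, div_le_div_iff₀ hMN hKM]
    nlinarith
  have hvK : (1:ℝ) / M = v * K := by
    rw [hv]; field_simp
  -- feasibility
  have feas1 : ∀ i j, 0 ≤ γstar i j := by
    intro i j; rw [hγstar]; split_ifs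
    · positivity
    · exact le_refl 0
  have rowstar : ∀ i, ∑ j, γstar i j = 1 / (M:ℝ) := by
    intro i
    rw [← Equiv.sum_comp (σ i) (γstar i)]
    have h1 : ∀ l : Fin N, γstar i (σ i l) = if (l : ℕ) < K then v else 0 := by
      intro l; rw [hγstar, Equiv.symm_apply_apply]
    have h3 : (∑ l : Fin N, if (l : ℕ) < K then v else 0)
        = ∑ n ∈ Finset.range N, (if n < K then v else 0) :=
      Fin.sum_univ_eq_sum_range (fun n => if n < K then v else 0) N
    rw [Finset.sum_congr rfl (fun l _ => h1 l), h3, ite_sum_eq N K hK2,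
      Finset.sum_const, Finset.card_range, nsmul_eq_mul, hvK]
    ring
  refine ⟨⟨feas1, rowstar⟩, ?_⟩
  -- sup for γstar
  have hbddj : ∀ (γ : Fin M → Fin N → ℝ) (i : Fin M),
      BddAbove (Set.range fun j => |γ i j - c|) := fun γ i => Set.Finite.bddAbove (Set.finite_range _)
  have hbddi : ∀ (γ : Fin M → Fin N → ℝ),
      BddAbove (Set.range fun i => ⨆ j, |γ i j - c|) := fun γ => Set.Finite.bddAbove (Set.finite_range _)
  have hsupstar : (⨆ i, ⨆ j, |γstar i j - c|) = v - c := by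
    apply le_antisymm
    · apply ciSup_le; intro i; apply ciSup_le; intro j
      rw [hγstar]; split_ifs
      · rw [abs_of_nonneg (by linarith)]
      · rw [abs_of_nonpos (by linarith)]; linarith
    · have hval : |γstar (⟨0, by omega⟩ : Fin M) (σ ⟨0, by omega⟩ ⟨0, by omega⟩) - c| = v - c := by
        rw [hγstar, Equiv.symm_apply_apply, if_pos (by simp; omega),
          abs_of_nonneg (by linarith)]
      calc v - c = |γstar ⟨0, by omega⟩ (σ ⟨0, by omega⟩ ⟨0, by omega⟩) - c| := hval.symm
        _ ≤ ⨆ j, |γstar (⟨0, by omega⟩ : Fin M) j - c| := le_ciSup (hbddj γstar _) _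
        _ ≤ ⨆ i, ⨆ j, |γstar i j - c| := le_ciSup (hbddi γstar) _
  -- cost of γstar
  have coststar : ∀ i, ∑ j, γstar i j * d i j = v * ∑ l ∈ Finset.range K, D i l := by
    intro i
    rw [← Equiv.sum_comp (σ i) (fun j => γstar i j * d i j)]
    have h1 : ∀ l : Fin N, γstar i (σ i l) * d i (σ i l)
        = if (l : ℕ) < K then v * D i (l : ℕ) else 0 := by
      intro l
      rw [hγstar, Equiv.symm_apply_apply, ← hD i l]
      split_ifs <;> ring
    have h3 : (∑ l : Fin N, if (l : ℕ) < K then v * D i (l : ℕ) else 0)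
        = ∑ n ∈ Finset.range N, (if n < K then v * D i n else 0) :=
      Fin.sum_univ_eq_sum_range (fun n => if n < K then v * D i n else 0) N
    rw [Finset.sum_congr rfl (fun l _ => h1 l), h3, ite_sum_eq N K hK2, ← Finset.mul_sum]
  intro γ hγ
  set s : ℝ := ⨆ i, ⨆ j, |γ i j - c| with hs
  set u : ℝ := c + s with hu
  have hγu : ∀ i j, γ i j ≤ u := by
    intro i j
    have h1 : |γ i j - c| ≤ s := by
      calc |γ i j - c| ≤ ⨆ j, |γ i j - c| := le_ciSup (hbddj γ i) j
        _ ≤ s := le_ciSup (hbddi γ) i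
    have := abs_le.1 h1
    rw [hu]; linarith [this.2]
  -- row lower bound
  have hrow : ∀ (i : Fin M) (m : Fin N),
      u * (∑ n ∈ Finset.range (m:ℕ), (D i n - D i (m:ℕ))) + (1/(M:ℝ)) * D i (m:ℕ)
        ≤ ∑ j, γ i j * d i j := by
    intro i m
    have hmono : Monotone (fun l : Fin N => D i (l:ℕ)) := by
      intro a b hab
      show D i (a : ℕ) ≤ D i (b : ℕ)
      rw [hD i a, hD i b]
      exact hsort i hab
    have key := row_lb (fun l : Fin N => D i (l:ℕ)) (fun l => γ i (σ i l)) hmono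
      (fun l => hγ.1 i _) u (fun l => hγu i _) m
    have hsum1 : (∑ l, γ i (σ i l)) = 1/(M:ℝ) := by
      rw [Equiv.sum_comp (σ i) (γ i)]; exact hγ.2 i
    have hsum2 : (∑ l : Fin N, if (l:ℕ) < (m:ℕ) then u * (D i (l:ℕ) - D i (m:ℕ)) else 0)
        = u * (∑ n ∈ Finset.range (m:ℕ), (D i n - D i (m:ℕ))) := by
      have h3 : (∑ l : Fin N, if (l:ℕ) < (m:ℕ) then u * (D i (l:ℕ) - D i (m:ℕ)) else 0)
          = ∑ n ∈ Finset.range N, (if n < (m:ℕ) then u * (D i n - D i (m:ℕ)) else 0) :=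
        Fin.sum_univ_eq_sum_range (fun n => if n < (m:ℕ) then u * (D i n - D i (m:ℕ)) else 0) N
      rw [h3, ite_sum_eq N (m:ℕ) m.isLt.le, ← Finset.mul_sum]
    have hsum3 : (∑ l : Fin N, γ i (σ i l) * D i (l:ℕ)) = ∑ j, γ i j * d i j := by
      rw [← Equiv.sum_comp (σ i) (fun j => γ i j * d i j)]
      exact Finset.sum_congr rfl (fun l _ => by rw [hD i l])
    rw [← hsum1, ← hsum2, ← hsum3]
    exact key
  rw [hL γstar, hL γ, hsupstar, ← hs]
  have hcs : ∀ i, ∑ j, γstar i j * d i j = v * ∑ l ∈ Finset.range K, D i l := coststar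
  rcases le_total u v with huv | huv
  · -- case u ≤ v : use m = K, and maximality of K
    have hkey : (1 - α) * (M:ℝ) ≤ (α / C) * (∑ i, ∑ l ∈ Finset.range K, (D i K - D i l)) := by
      by_contra hcon
      push_neg at hcon
      have := hKmax (K+1) (by omega) (by omega) (by simpa using hcon)
      omega
    have hmK : (K:ℕ) < N := hKltN
    have hcosti : ∀ i : Fin M,
        v * (∑ l ∈ Finset.range K, D i l) + (v - u) * (∑ l ∈ Finset.range K, (D i K - D i l))
          ≤ ∑ j, γ i j * d i j := by
      intro i
      have h1 := hrow i ⟨K, hmK⟩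
      simp only at h1
      have hS1 : (∑ l ∈ Finset.range K, (D i K - D i l))
          = (K:ℝ) * D i K - ∑ l ∈ Finset.range K, D i l := by
        rw [Finset.sum_sub_distrib, Finset.sum_const, Finset.card_range, nsmul_eq_mul]
      have hS2 : (∑ n ∈ Finset.range K, (D i n - D i K))
          = ∑ l ∈ Finset.range K, D i l - (K:ℝ) * D i K := by
        rw [Finset.sum_sub_distrib, Finset.sum_const, Finset.card_range, nsmul_eq_mul]
      have hid : v * (∑ l ∈ Finset.range K, D i l)
            + (v - u) * (∑ l ∈ Finset.range K, (D i K - D i l))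
          = u * (∑ n ∈ Finset.range K, (D i n - D i K)) + (1/(M:ℝ)) * D i K := by
        rw [hS1, hS2, hvK]; ring
      rw [hid]; exact h1
    have htot : v * (∑ i, ∑ l ∈ Finset.range K, D i l)
        + (v - u) * (∑ i, ∑ l ∈ Finset.range K, (D i K - D i l))
        ≤ ∑ i, ∑ j, γ i j * d i j := by
      rw [Finset.mul_sum, Finset.mul_sum, ← Finset.sum_add_distrib]
      exact Finset.sum_le_sum (fun i _ => hcosti i)
    have hstar : (∑ i, ∑ j, γstar i j * d i j) = v * (∑ i, ∑ l ∈ Finset.range K, D i l) := by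
      rw [Finset.mul_sum]; exact Finset.sum_congr rfl (fun i _ => hcs i)
    have hmul : (v - u) * ((1 - α) * (M:ℝ))
        ≤ (v - u) * ((α / C) * (∑ i, ∑ l ∈ Finset.range K, (D i K - D i l))) :=
      mul_le_mul_of_nonneg_left hkey (by linarith)
    have hAC : 0 ≤ α / C := by positivity
    have hcost : (α / C) * (∑ i, ∑ j, γstar i j * d i j)
        + (α / C) * ((v - u) * (∑ i, ∑ l ∈ Finset.range K, (D i K - D i l)))
        ≤ (α / C) * (∑ i, ∑ j, γ i j * d i j) := by
      rw [hstar]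
      have := mul_le_mul_of_nonneg_left htot hAC
      linarith [this]
    have hsv : s = u - c := by rw [hu]; ring
    have hassoc : (α / C) * ((v - u) * (∑ i, ∑ l ∈ Finset.range K, (D i K - D i l)))
        = (v - u) * ((α / C) * (∑ i, ∑ l ∈ Finset.range K, (D i K - D i l))) := by ring
    have e1 : (1 - α) * ((M:ℝ) * (v - c)) - (1 - α) * ((M:ℝ) * s)
        = (v - u) * ((1 - α) * (M:ℝ)) := by rw [hsv]; ring
    linarith [hcost, hmul, hassoc, e1]
  · -- case v ≤ u : use m = K - 1 and hKcond
    have hmK : (K - 1 : ℕ) < N := by omega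
    have hcast : ((K - 1 : ℕ) : ℝ) = (K:ℝ) - 1 := by
      rw [Nat.cast_sub hK1]; norm_num
    have hcosti : ∀ i : Fin M,
        v * (∑ l ∈ Finset.range K, D i l)
          - (u - v) * (∑ l ∈ Finset.range (K-1), (D i (K-1) - D i l))
          ≤ ∑ j, γ i j * d i j := by
      intro i
      have h1 := hrow i ⟨K-1, hmK⟩
      simp only at h1
      have hS1 : (∑ l ∈ Finset.range (K-1), (D i (K-1) - D i l))
          = ((K:ℝ) - 1) * D i (K-1) - ∑ l ∈ Finset.range (K-1), D i l := by
        rw [Finset.sum_sub_distrib, Finset.sum_const, Finset.card_range, nsmul_eq_mul, hcast]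
      have hS2 : (∑ n ∈ Finset.range (K-1), (D i n - D i (K-1)))
          = ∑ l ∈ Finset.range (K-1), D i l - ((K:ℝ) - 1) * D i (K-1) := by
        rw [Finset.sum_sub_distrib, Finset.sum_const, Finset.card_range, nsmul_eq_mul, hcast]
      have hsplit : (∑ l ∈ Finset.range K, D i l)
          = ∑ l ∈ Finset.range (K-1), D i l + D i (K-1) := by
        conv_lhs => rw [show K = (K-1) + 1 by omega]
        rw [Finset.sum_range_succ]
      have hid : v * (∑ l ∈ Finset.range K, D i l)
            - (u - v) * (∑ l ∈ Finset.range (K-1), (D i (K-1) - D i l))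
          = u * (∑ n ∈ Finset.range (K-1), (D i n - D i (K-1))) + (1/(M:ℝ)) * D i (K-1) := by
        rw [hS1, hS2, hsplit, hvK]; ring
      rw [hid]; exact h1
    have htot : v * (∑ i, ∑ l ∈ Finset.range K, D i l)
        - (u - v) * (∑ i, ∑ l ∈ Finset.range (K-1), (D i (K-1) - D i l))
        ≤ ∑ i, ∑ j, γ i j * d i j := by
      rw [Finset.mul_sum, Finset.mul_sum, ← Finset.sum_sub_distrib]
      exact Finset.sum_le_sum (fun i _ => hcosti i)
    have hstar : (∑ i, ∑ j, γstar i j * d i j) = v * (∑ i, ∑ l ∈ Finset.range K, D i l) := by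
      rw [Finset.mul_sum]; exact Finset.sum_congr rfl (fun i _ => hcs i)
    have hmul : (u - v) * ((α / C) * (∑ i, ∑ l ∈ Finset.range (K-1), (D i (K-1) - D i l)))
        ≤ (u - v) * ((1 - α) * (M:ℝ)) :=
      mul_le_mul_of_nonneg_left (le_of_lt hKcond) (by linarith)
    have hAC : 0 ≤ α / C := by positivity
    have hcost : (α / C) * (∑ i, ∑ j, γstar i j * d i j)
        - (α / C) * ((u - v) * (∑ i, ∑ l ∈ Finset.range (K-1), (D i (K-1) - D i l)))
        ≤ (α / C) * (∑ i, ∑ j, γ i j * d i j) := by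
      rw [hstar]
      have := mul_le_mul_of_nonneg_left htot hAC
      linarith [this]
    have hsv : s = u - c := by rw [hu]; ring
    have hassoc : (α / C) * ((u - v) * (∑ i, ∑ l ∈ Finset.range (K-1), (D i (K-1) - D i l)))
        = (u - v) * ((α / C) * (∑ i, ∑ l ∈ Finset.range (K-1), (D i (K-1) - D i l))) := by ring
    have e1 : (1 - α) * ((M:ℝ) * s) - (1 - α) * ((M:ℝ) * (v - c))
        = (u - v) * ((1 - α) * (M:ℝ)) := by rw [hsv]; ring
    linarith [hcost, hmul, hassoc, e1]
end

section
/- Assume N > 1 and α < 1, and let the regularizer be G∞. Let K = max{k ∈ [N] : (α/C)·Σ_{i=1}^{M} Σ_{l=1}^{k−1} (d_{i j_k^i} − d_{i j_l^i}) < (1−α)·M}, and define γ* ∈ ℝ^{M×N} by γ*_{ij} = 1/(K·M) if j ∈ {j_1^i, …, j_K^i} and γ*_{ij} = 0 otherwise. Assume K ≤ N/2, (α/C)·Σ_{i=1}^{M} Σ_{l=1}^{K} (d_{i j_{K+1}^i} − d_{i j_l^i}) > (1−α)·M, and that there is no i ∈ [M] with d_{i j_{K+1}^i} = d_{i j_K^i}.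 Then γ* is the unique minimizer of L over feasible matrices: L(γ*) < L(γ) for every feasible γ ≠ γ*. -/
set_option maxHeartbeats 1000000

open Finset

/-- Theorem 1 (uniqueness part): under the strict trade-off inequality at `K+1` and
no ties among the relevant sorted distances, the KNN-uniform transport is the unique
minimizer of the `G∞`-regularized objective. -/
theorem stmt_1 (M N : ℕ) (hM : 1 ≤ M) (hN : 1 < N)
    (d : Fin M → Fin N → ℝ) (hd : ∀ i j, 0 ≤ d i j)
    (C α : ℝ) (hC : 0 < C) (hα0 : 0 ≤ α) (hα1 : α < 1)
    (σ : Fin M → Equiv.Perm (Fin N))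
    (hsort : ∀ i, Monotone fun k => d i (σ i k))
    (D : Fin M → ℕ → ℝ) (hD : ∀ i (l : Fin N), D i (l : ℕ) = d i (σ i l))
    (K : ℕ) (hK1 : 1 ≤ K) (hK2 : K ≤ N)
    (hKcond : (α / C) * (∑ i, ∑ l ∈ Finset.range (K - 1), (D i (K - 1) - D i l))
      < (1 - α) * (M : ℝ))
    (hKmax : ∀ k, 1 ≤ k → k ≤ N →
      (α / C) * (∑ i, ∑ l ∈ Finset.range (k - 1), (D i (k - 1) - D i l)) < (1 - α) * (M : ℝ) →
      k ≤ K)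
    (hKN : (K : ℝ) ≤ (N : ℝ) / 2)
    -- the strict inequality at `K + 1` (paper indices):
    (hstrict : (α / C) * (∑ i, ∑ l ∈ Finset.range K, (D i K - D i l)) > (1 - α) * (M : ℝ))
    -- no `i` with `d_{i j_{K+1}^i} = d_{i j_K^i}` (paper indices):
    (hne : ∀ i, D i K ≠ D i (K - 1))
    (γstar : Fin M → Fin N → ℝ)
    (hγstar : ∀ i j, γstar i j = if (((σ i).symm j : Fin N) : ℕ) < K then 1 / ((K : ℝ) * M) else 0)
    (L : (Fin M → Fin N → ℝ) → ℝ)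
    (hL : ∀ γ, L γ = (α / C) * (∑ i, ∑ j, γ i j * d i j)
      + (1 - α) * ((M : ℝ) * ⨆ i, ⨆ j, |γ i j - 1 / ((M : ℝ) * N)|)) :
    ∀ γ : Fin M → Fin N → ℝ,
      ((∀ i j, 0 ≤ γ i j) ∧ (∀ i, ∑ j, γ i j = 1 / (M : ℝ))) → γ ≠ γstar →
      L γstar < L γ := by
  obtain ⟨K', rfl⟩ : ∃ K', K = K' + 1 := ⟨K - 1, by omega⟩
  simp only [Nat.add_sub_cancel] at hKcond hne
  intro γ hfeas hγne
  obtain ⟨hγ0, hγs⟩ := hfeas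
  haveI instM : Nonempty (Fin M) := ⟨⟨0, by omega⟩⟩
  haveI instN : Nonempty (Fin N) := ⟨⟨0, by omega⟩⟩
  have hM0 : (0:ℝ) < M := by exact_mod_cast (by omega : 0 < M)
  have hN0 : (0:ℝ) < N := by exact_mod_cast (by omega : 0 < N)
  have hKR : (0:ℝ) < ((K' + 1 : ℕ) : ℝ) := by exact_mod_cast Nat.succ_pos K'
  have hKN' : K' + 1 < N := by
    by_contra h
    push_neg at h
    have h2 : (N:ℝ) ≤ ((K' + 1 : ℕ) : ℝ) := by exact_mod_cast h
    have h3 : (1:ℝ) < N := by exact_mod_cast hN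
    linarith [hKN]
  have hα : 0 < α := by
    rcases hα0.lt_or_eq with h | h
    · exact h
    · exfalso
      rw [← h] at hstrict
      norm_num at hstrict
      nlinarith [hstrict]
  have hαC : 0 < α / C := div_pos hα hC
  set c : ℝ := 1 / ((M:ℝ) * N) with hc
  set u : ℝ := 1 / (((K' + 1 : ℕ) : ℝ) * M) with hu
  have hKu : ((K' + 1 : ℕ) : ℝ) * u = 1 / (M:ℝ) := by
    rw [hu]; field_simp
  have hc0 : 0 < c := by rw [hc]; positivity
  have h2cu : 2 * c ≤ u := by
    rw [hc, hu, mul_one_div, div_le_div_iff₀ (by positivity) (by positivity)]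
    have hK2' : 2 * ((K' + 1 : ℕ) : ℝ) ≤ (N:ℝ) := by linarith [hKN]
    nlinarith
  -- monotonicity of D
  have Dmono : ∀ (i : Fin M) (a b : ℕ), a ≤ b → b < N → D i a ≤ D i b := by
    intro i a b hab hb
    have ha : a < N := lt_of_le_of_lt hab hb
    have h1 : D i a = d i (σ i ⟨a, ha⟩) := by simpa using hD i ⟨a, ha⟩
    have h2 : D i b = d i (σ i ⟨b, hb⟩) := by simpa using hD i ⟨b, hb⟩
    rw [h1, h2]
    exact hsort i (show (⟨a, ha⟩ : Fin N) ≤ ⟨b, hb⟩ from hab)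
  have hlt : ∀ i : Fin M, D i K' < D i (K' + 1) :=
    fun i => lt_of_le_of_ne (Dmono i K' (K' + 1) (by omega) hKN') (Ne.symm (hne i))
  -- splitting sums over range N
  have hsplit : ∀ f : ℕ → ℝ, (∀ m, K' + 1 ≤ m → m < N → f m = 0) →
      ∑ m ∈ Finset.range N, f m = ∑ m ∈ Finset.range (K' + 1), f m := by
    intro f hf
    rw [← Finset.sum_range_add_sum_Ico f hKN'.le]
    have hz : ∑ m ∈ Finset.Ico (K' + 1) N, f m = 0 :=
      Finset.sum_eq_zero (fun m hm => by
        rw [Finset.mem_Ico] at hm; exact hf m hm.1 hm.2)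
    rw [hz, add_zero]
  -- sum of the positive parts
  have smax : ∀ (i : Fin M) (m0 : ℕ), K' ≤ m0 → m0 ≤ K' + 1 → m0 < N →
      ∑ j, max (D i m0 - d i j) 0 = ∑ l ∈ Finset.range (K' + 1), (D i m0 - D i l) := by
    intro i m0 h1 h2 h3
    have e1 : ∑ j, max (D i m0 - d i j) 0
        = ∑ l : Fin N, max (D i m0 - d i (σ i l)) 0 :=
      (Equiv.sum_comp (σ i) (fun j => max (D i m0 - d i j) 0)).symm
    have e2 : ∀ l : Fin N, max (D i m0 - d i (σ i l)) 0 = max (D i m0 - D i (l : ℕ)) 0 := by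
      intro l; rw [hD i l]
    rw [e1, Finset.sum_congr rfl (fun l _ => e2 l),
      Fin.sum_univ_eq_sum_range (fun m => max (D i m0 - D i m) 0) N,
      hsplit _ (fun m hm hm2 => by
        have : D i m0 ≤ D i m := Dmono i m0 m (le_trans h2 hm) hm2
        exact max_eq_right (by linarith))]
    exact Finset.sum_congr rfl (fun m hm => by
      rw [Finset.mem_range] at hm
      have : D i m ≤ D i m0 := Dmono i m m0 (by omega) h3
      exact max_eq_left (by linarith))
  -- suprema
  have hle : ∀ (δ : Fin M → Fin N → ℝ) (i : Fin M) (j : Fin N),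
      |δ i j - c| ≤ ⨆ i', ⨆ j', |δ i' j' - c| := by
    intro δ i j
    have h1 : |δ i j - c| ≤ ⨆ j', |δ i j' - c| :=
      le_ciSup (f := fun j' => |δ i j' - c|) (Set.Finite.bddAbove (Set.finite_range _)) j
    exact h1.trans (le_ciSup (f := fun i' => ⨆ j', |δ i' j' - c|)
      (Set.Finite.bddAbove (Set.finite_range _)) i)
  have hsup_le : ∀ (δ : Fin M → Fin N → ℝ) (b : ℝ), (∀ i j, |δ i j - c| ≤ b) →
      (⨆ i, ⨆ j, |δ i j - c|) ≤ b := fun δ b h => ciSup_le (fun i => ciSup_le (h i))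
  -- value of the sup for γstar
  have hTstar : (⨆ i, ⨆ j, |γstar i j - c|) = u - c := by
    apply le_antisymm
    · apply hsup_le
      intro i j
      rw [hγstar i j]
      split_ifs
      · rw [abs_of_nonneg (by linarith)]
      · rw [zero_sub, abs_neg, abs_of_nonneg hc0.le]; linarith
    · have h1 := hle γstar ⟨0, by omega⟩ ((σ ⟨0, by omega⟩) ⟨0, by omega⟩)
      rw [hγstar, Equiv.symm_apply_apply] at h1
      rw [if_pos (by simp : (((⟨0, by omega⟩ : Fin N)) : ℕ) < K' + 1)] at h1
      rw [abs_of_nonneg (by linarith)] at h1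
      exact h1
  -- γstar cost
  have hstar_cost : ∀ i, ∑ j, γstar i j * d i j = u * ∑ l ∈ Finset.range (K' + 1), D i l := by
    intro i
    have e1 : ∑ j, γstar i j * d i j = ∑ l : Fin N, γstar i (σ i l) * d i (σ i l) :=
      (Equiv.sum_comp (σ i) (fun j => γstar i j * d i j)).symm
    have e2 : ∀ l : Fin N, γstar i (σ i l) * d i (σ i l)
        = (if (l : ℕ) < K' + 1 then u * D i (l : ℕ) else 0) := by
      intro l
      rw [hγstar i (σ i l), Equiv.symm_apply_apply, ← hD i l]
      split_ifs
      · rfl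
      · ring
    rw [e1, Finset.sum_congr rfl (fun l _ => e2 l),
      Fin.sum_univ_eq_sum_range (fun m => if m < K' + 1 then u * D i m else 0) N,
      hsplit _ (fun m hm _ => by rw [if_neg (by omega)]), Finset.mul_sum]
    exact Finset.sum_congr rfl (fun m hm => by
      rw [Finset.mem_range] at hm; rw [if_pos hm])
  -- notation for the objective pieces of γ
  set t : ℝ := ⨆ i, ⨆ j, |γ i j - c| with htdef
  set G : ℝ := ∑ i, ∑ j, γ i j * d i j with hG
  set SD : ℝ := ∑ i, ∑ l ∈ Finset.range (K' + 1), D i l with hSD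
  set SA : ℝ := ∑ i, ∑ l ∈ Finset.range (K' + 1), (D i K' - D i l) with hSA
  set SB : ℝ := ∑ i, ∑ l ∈ Finset.range (K' + 1), (D i (K' + 1) - D i l) with hSB
  set E1 : ℝ := ∑ i, D i K' with hE1
  set E2 : ℝ := ∑ i, D i (K' + 1) with hE2
  have hγu : ∀ i j, γ i j ≤ c + t := by
    intro i j
    have := (le_abs_self (γ i j - c)).trans (hle γ i j)
    linarith
  have hLγ : L γ = (α / C) * G + (1 - α) * ((M : ℝ) * t) := hL γ
  have hLstar : L γstar = (α / C) * (u * SD) + (1 - α) * ((M : ℝ) * (u - c)) := by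
    rw [hL γstar, hTstar, Finset.sum_congr rfl (fun i _ => hstar_cost i), ← Finset.mul_sum]
  -- identities
  have hidA : u * SD = E1 * (1 / (M:ℝ)) - u * SA := by
    rw [hSD, hSA, hE1, Finset.mul_sum, Finset.mul_sum, Finset.sum_mul, ← Finset.sum_sub_distrib]
    refine Finset.sum_congr rfl (fun i _ => ?_)
    rw [Finset.sum_sub_distrib, Finset.sum_const, Finset.card_range, nsmul_eq_mul]
    linear_combination (D i K') * hKu
  have hidB : u * SD = E2 * (1 / (M:ℝ)) - u * SB := by
    rw [hSD, hSB, hE2, Finset.mul_sum, Finset.mul_sum, Finset.sum_mul, ← Finset.sum_sub_distrib]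
    refine Finset.sum_congr rfl (fun i _ => ?_)
    rw [Finset.sum_sub_distrib, Finset.sum_const, Finset.card_range, nsmul_eq_mul]
    linear_combination (D i (K' + 1)) * hKu
  -- the coefficient inequalities
  have hP : (α / C) * SA < (1 - α) * M := by
    have : SA = ∑ i, ∑ l ∈ Finset.range K', (D i K' - D i l) := by
      rw [hSA]
      refine Finset.sum_congr rfl (fun i _ => ?_)
      rw [Finset.sum_range_succ, sub_self, add_zero]
    rw [this]; exact hKcond
  have hQ : (1 - α) * M < (α / C) * SB := hstrict
  -- per-term dual bound
  have hterm : ∀ (i : Fin M) (lam u' : ℝ), (∀ j, γ i j ≤ u') → ∀ j : Fin N,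
      lam * γ i j - u' * max (lam - d i j) 0 ≤ γ i j * d i j := by
    intro i lam u' hu' j
    rcases le_total (d i j) lam with h | h
    · rw [max_eq_left (by linarith)]
      nlinarith [mul_nonneg (sub_nonneg.2 (hu' j)) (sub_nonneg.2 h)]
    · rw [max_eq_right (by linarith)]
      nlinarith [mul_nonneg (hγ0 i j) (sub_nonneg.2 h)]
  have hroweq : ∀ (i : Fin M) (lam u' : ℝ),
      ∑ j, (lam * γ i j - u' * max (lam - d i j) 0)
        = lam * (1 / (M:ℝ)) - u' * ∑ j, max (lam - d i j) 0 := by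
    intro i lam u'
    rw [Finset.sum_sub_distrib, ← Finset.mul_sum, ← Finset.mul_sum, hγs i]
  have rowb : ∀ (i : Fin M) (lam u' : ℝ), (∀ j, γ i j ≤ u') →
      lam * (1 / (M:ℝ)) - u' * ∑ j, max (lam - d i j) 0 ≤ ∑ j, γ i j * d i j := by
    intro i lam u' hu'
    rw [← hroweq i lam u']
    exact Finset.sum_le_sum (fun j _ => hterm i lam u' hu' j)
  -- aggregated bounds
  have hGb1 : E1 * (1 / (M:ℝ)) - (c + t) * SA ≤ G := by
    rw [hE1, hSA, hG, Finset.sum_mul, Finset.mul_sum, ← Finset.sum_sub_distrib]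
    refine Finset.sum_le_sum (fun i _ => ?_)
    have := rowb i (D i K') (c + t) (hγu i)
    rwa [smax i K' le_rfl (by omega) (by omega)] at this
  have hGb2 : E2 * (1 / (M:ℝ)) - (c + t) * SB ≤ G := by
    rw [hE2, hSB, hG, Finset.sum_mul, Finset.mul_sum, ← Finset.sum_sub_distrib]
    refine Finset.sum_le_sum (fun i _ => ?_)
    have := rowb i (D i (K' + 1)) (c + t) (hγu i)
    rwa [smax i (K' + 1) (by omega) le_rfl hKN'] at this
  -- case analysis on t
  rcases lt_trichotomy t (u - c) with ht | ht | ht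
  · -- t < u - c : use the bound with lambda = D i (K'+1)
    rw [hLγ, hLstar, hidB]
    have h1 : 0 ≤ (α / C) * (G - (E2 * (1 / (M:ℝ)) - (c + t) * SB)) :=
      mul_nonneg hαC.le (by linarith)
    have h2 : 0 < ((α / C) * SB - (1 - α) * M) * ((u - c) - t) :=
      mul_pos (by linarith) (by linarith)
    linarith [h1, h2]
  · -- t = u - c : equality case, use strictness from γ ≠ γstar
    have hcu : c + t = u := by rw [ht]; ring
    have hγuu : ∀ i j, γ i j ≤ u := fun i j => by
      have := hγu i j; rw [hcu] at this; exact this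
    -- find a row where γ differs from γstar
    have hrow : ∃ i₀ : Fin M, γ i₀ ≠ γstar i₀ := by
      by_contra h; push_neg at h; exact hγne (funext h)
    obtain ⟨i₀, hi₀⟩ := hrow
    -- there must be some l with K'+1 ≤ l and γ i₀ (σ i₀ l) ≠ 0
    have hbig : ∃ l : Fin N, K' + 1 ≤ (l : ℕ) ∧ γ i₀ (σ i₀ l) ≠ 0 := by
      by_contra hno
      push_neg at hno
      apply hi₀
      funext j
      -- counting argument: the mass on {l < K'+1} is forced to be u each
      have hsum : ∑ l : Fin N, γ i₀ (σ i₀ l) = 1 / (M:ℝ) := by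
        rw [Equiv.sum_comp (σ i₀) (fun j => γ i₀ j)]; exact hγs i₀
      have hsplit2 : ∑ l ∈ Finset.univ.filter (fun l : Fin N => (l : ℕ) < K' + 1), γ i₀ (σ i₀ l)
          = 1 / (M:ℝ) := by
        rw [← hsum, ← Finset.sum_filter_add_sum_filter_not Finset.univ
          (fun l : Fin N => (l : ℕ) < K' + 1) (fun l => γ i₀ (σ i₀ l))]
        have hz : ∑ l ∈ Finset.univ.filter (fun l : Fin N => ¬(l : ℕ) < K' + 1),
            γ i₀ (σ i₀ l) = 0 :=
          Finset.sum_eq_zero (fun l hl => by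
            rw [Finset.mem_filter] at hl
            exact hno l (le_of_not_gt hl.2))
        rw [hz, add_zero]
      have hcard : ∑ l ∈ Finset.univ.filter (fun l : Fin N => (l : ℕ) < K' + 1), u
          = 1 / (M:ℝ) := by
        rw [Finset.sum_filter,
          Fin.sum_univ_eq_sum_range (fun m => if m < K' + 1 then u else 0) N,
          hsplit _ (fun m hm _ => by rw [if_neg (by omega)]),
          Finset.sum_congr rfl (fun m hm => if_pos (Finset.mem_range.1 hm)),
          Finset.sum_const, Finset.card_range, nsmul_eq_mul, hKu]
      have hzero : ∀ l ∈ Finset.univ.filter (fun l : Fin N => (l : ℕ) < K' + 1),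
          u - γ i₀ (σ i₀ l) = 0 := by
        intro l hl
        have hs : ∑ l ∈ Finset.univ.filter (fun l : Fin N => (l : ℕ) < K' + 1),
            (u - γ i₀ (σ i₀ l)) = 0 := by
          rw [Finset.sum_sub_distrib, hsplit2, hcard, sub_self]
        have hnn : ∀ l ∈ Finset.univ.filter (fun l : Fin N => (l : ℕ) < K' + 1),
            0 ≤ u - γ i₀ (σ i₀ l) := by
          intro l _
          linarith [hγuu i₀ (σ i₀ l)]
        exact (Finset.sum_eq_zero_iff_of_nonneg hnn).1 hs l hl
      -- now conclude γ i₀ j = γstar i₀ j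
      rw [hγstar i₀ j]
      rcases lt_or_ge (((σ i₀).symm j : Fin N) : ℕ) (K' + 1) with hj | hj
      · rw [if_pos hj]
        have := hzero ((σ i₀).symm j) (by simp [hj]; omega)
        have happ : σ i₀ ((σ i₀).symm j) = j := Equiv.apply_symm_apply _ _
        rw [happ] at this
        linarith
      · rw [if_neg (by omega)]
        have := hno ((σ i₀).symm j) hj
        have happ : σ i₀ ((σ i₀).symm j) = j := Equiv.apply_symm_apply _ _
        rwa [happ] at this
    obtain ⟨l₀, hl₀K, hl₀ne⟩ := hbig
    have hl₀pos : 0 < γ i₀ (σ i₀ l₀) := lt_of_le_of_ne (hγ0 i₀ (σ i₀ l₀)) (Ne.symm hl₀ne)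
    have hdl₀ : D i₀ K' < d i₀ (σ i₀ l₀) := by
      rw [← hD i₀ l₀]
      exact lt_of_lt_of_le (hlt i₀) (Dmono i₀ (K' + 1) (l₀ : ℕ) hl₀K l₀.isLt)
    -- strict row bound at i₀
    have hstrictrow : D i₀ K' * (1 / (M:ℝ)) - u * ∑ l ∈ Finset.range (K' + 1), (D i₀ K' - D i₀ l)
        < ∑ j, γ i₀ j * d i₀ j := by
      rw [← smax i₀ K' le_rfl (by omega) (by omega), ← hroweq i₀ (D i₀ K') u]
      refine Finset.sum_lt_sum (fun j _ => hterm i₀ (D i₀ K') u (hγuu i₀) j)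
        ⟨σ i₀ l₀, Finset.mem_univ _, ?_⟩
      have hmax : max (D i₀ K' - d i₀ (σ i₀ l₀)) 0 = 0 := max_eq_right (by linarith)
      rw [hmax, mul_zero, sub_zero]
      nlinarith [hl₀pos, hdl₀]
    have hGlt : E1 * (1 / (M:ℝ)) - u * SA < G := by
      rw [hE1, hSA, hG, Finset.sum_mul, Finset.mul_sum, ← Finset.sum_sub_distrib]
      refine Finset.sum_lt_sum (fun i _ => ?_) ⟨i₀, Finset.mem_univ _, hstrictrow⟩
      have := rowb i (D i K') u (hγuu i)
      rwa [smax i K' le_rfl (by omega) (by omega)] at this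
    rw [hLγ, hLstar, hidA, ht]
    have := mul_lt_mul_of_pos_left hGlt hαC
    linarith [this]
  · -- u - c < t : use the bound with lambda = D i K'
    rw [hLγ, hLstar, hidA]
    have h1 : 0 ≤ (α / C) * (G - (E1 * (1 / (M:ℝ)) - (c + t) * SA)) :=
      mul_nonneg hαC.le (by linarith)
    have h2a : 0 < (1 - α) * (M:ℝ) - (α / C) * SA := by linarith
    have h2b : 0 < t - (u - c) := by linarith
    have h2 := mul_pos h2a h2b
    linarith [h1, h2]
end

section
/- Assume N > 1 and 0 < α ≤ 1, and let the regularizer be G_TV. Define γ* ∈ ℝ^{M×N} row-wise by: for 2 ≤ k ≤ N, γ*_{i j_k^i} = 1/(MN) if d_{i j_k^i} − d_{i j_1^i} < (1−α)·C/α and γ*_{i j_k^i} = 0 otherwise, and γ*_{i j_1^i} = 1/M − Σ_{k=2}^{N} γ*_{i j_k^i}. Then γ* is feasible and L(γ*) ≤ L(γ) for every feasible γ ∈ ℝ^{M×N}. -/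
open Finset

/-- Pointwise dual-certificate inequality for one entry. -/
lemma key_ineq (c cmin lam a x g : ℝ) (hlam : 0 ≤ lam) (ha : 0 ≤ a) (hx : 0 ≤ x)
    (hcmin : cmin ≤ c)
    (hcase : (g = 0 ∧ cmin + 2*lam ≤ c) ∨ (g = a ∧ c ≤ cmin + 2*lam) ∨ (c = cmin ∧ a ≤ g)) :
    c*g + lam*|g - a| + (cmin+lam)*(x-g) ≤ c*x + lam*|x - a| := by
  rcases abs_cases (x - a) with ⟨h1, h1'⟩ | ⟨h1, h1'⟩ <;>
  rcases abs_cases (g - a) with ⟨h2, h2'⟩ | ⟨h2, h2'⟩ <;>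
  rcases hcase with ⟨hg, hc⟩ | ⟨hg, hc⟩ | ⟨hc, hg⟩ <;>
  rw [h1, h2] <;> nlinarith

/-- Theorem 3 (optimality part): with the total-variation regularizer `G_TV`, the transport
that gives `1/(MN)` to every candidate within distance threshold `(1-α)C/α` of the nearest
neighbor (and the remaining mass to the nearest neighbor) is optimal. -/
theorem stmt_2 (M N : ℕ) (hM : 1 ≤ M) (hN : 1 < N)
    (d : Fin M → Fin N → ℝ) (hd : ∀ i j, 0 ≤ d i j)
    (C α : ℝ) (hC : 0 < C) (hα0 : 0 < α) (hα1 : α ≤ 1)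
    (σ : Fin M → Equiv.Perm (Fin N))
    (hsort : ∀ i, Monotone fun k => d i (σ i k))
    (γstar : Fin M → Fin N → ℝ)
    -- entries at positions `k ≥ 2` (paper indexing) of each row:
    (hγstar : ∀ i (k : Fin N), (k : ℕ) ≠ 0 →
      γstar i (σ i k) =
        if d i (σ i k) - d i (σ i ⟨0, by omega⟩) < (1 - α) * C / α then 1 / ((M : ℝ) * N)
        else 0)
    -- the first entry of each row receives the remaining mass:
    (hγstar0 : ∀ i, γstar i (σ i ⟨0, by omega⟩) =
      1 / (M : ℝ) - ∑ k ∈ Finset.univ.filter (fun k : Fin N => (k : ℕ) ≠ 0), γstar i (σ i k))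
    -- the objective with regularizer `G_TV`
    (L : (Fin M → Fin N → ℝ) → ℝ)
    (hL : ∀ γ, L γ = (α / C) * (∑ i, ∑ j, γ i j * d i j)
      + (1 - α) * ((1 / 2) * ∑ i, ∑ j, |γ i j - 1 / ((M : ℝ) * N)|)) :
    ((∀ i j, 0 ≤ γstar i j) ∧ (∀ i, ∑ j, γstar i j = 1 / (M : ℝ))) ∧
      ∀ γ : Fin M → Fin N → ℝ,
        ((∀ i j, 0 ≤ γ i j) ∧ (∀ i, ∑ j, γ i j = 1 / (M : ℝ))) → L γstar ≤ L γ := by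
  have hNpos : 0 < N := by omega
  have z : Fin N := ⟨0, by omega⟩
  have hM0 : (0:ℝ) < (M:ℝ) := by exact_mod_cast (by omega : 0 < M)
  have hN0 : (0:ℝ) < (N:ℝ) := by exact_mod_cast hNpos
  set a : ℝ := 1 / ((M:ℝ) * N) with ha_def
  have ha : 0 < a := by positivity
  set lam : ℝ := (1 - α)/2 with hlam_def
  have hlam : 0 ≤ lam := by simp only [hlam_def]; linarith
  -- values at nonzero k
  have hval : ∀ i (k : Fin N), (k:ℕ) ≠ 0 →
      γstar i (σ i k) = a ∨ γstar i (σ i k) = 0 := by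
    intro i k hk
    rw [hγstar i k hk]
    split
    · exact Or.inl rfl
    · exact Or.inr rfl
  -- the filter set
  have hfilt : (univ.filter (fun k : Fin N => (k:ℕ) ≠ 0)) =
      univ.erase (⟨0, by omega⟩ : Fin N) := by
    ext k
    simp [Fin.ext_iff]
  have hcard : (univ.filter (fun k : Fin N => (k:ℕ) ≠ 0)).card = N - 1 := by
    rw [hfilt, Finset.card_erase_of_mem (mem_univ _), card_univ, Fintype.card_fin]
  -- bound on sum over nonzero k
  have hsumle : ∀ i, ∑ k ∈ univ.filter (fun k : Fin N => (k:ℕ) ≠ 0), γstar i (σ i k)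
      ≤ ((N:ℝ) - 1) * a := by
    intro i
    have := Finset.sum_le_card_nsmul (univ.filter (fun k : Fin N => (k:ℕ) ≠ 0))
      (fun k => γstar i (σ i k)) a (by
        intro k hk
        show γstar i (σ i k) ≤ a
        rcases hval i k (by simpa using hk) with h | h <;> rw [h]
        exact le_of_lt ha)
    rw [hcard] at this
    have hcast : ((N - 1 : ℕ) : ℝ) = (N:ℝ) - 1 := by
      have : 1 ≤ N := by omega
      push_cast [this]
      ring
    calc _ ≤ (N - 1 : ℕ) • a := this
    _ = ((N:ℝ) - 1) * a := by rw [nsmul_eq_mul, hcast]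
  have hNa : 1 / (M:ℝ) = (N:ℝ) * a := by
    rw [ha_def]
    field_simp
  -- first entry receives at least a
  have hv : ∀ i, a ≤ γstar i (σ i ⟨0, by omega⟩) := by
    intro i
    rw [hγstar0 i, hNa]
    have h := hsumle i
    have h2 : (N:ℝ)*a - ((N:ℝ)-1)*a = a := by ring
    linarith
  -- nonnegativity
  have hpos : ∀ i j, 0 ≤ γstar i j := by
    intro i j
    have hj : σ i ((σ i).symm j) = j := (σ i).apply_symm_apply j
    by_cases hk : (((σ i).symm j : Fin N) : ℕ) = 0
    · have : (σ i).symm j = (⟨0, by omega⟩ : Fin N) := Fin.ext hk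
      rw [← hj, this]
      exact le_trans (le_of_lt ha) (hv i)
    · rw [← hj]
      rcases hval i _ hk with h | h <;> rw [h]
      exact le_of_lt ha
  -- row sums
  have hrowsum : ∀ i, ∑ j, γstar i j = 1 / (M:ℝ) := by
    intro i
    have h1 : ∑ j, γstar i j = ∑ k, γstar i (σ i k) :=
      (Equiv.sum_comp (σ i) (γstar i)).symm
    rw [h1]
    rw [← Finset.sum_filter_add_sum_filter_not univ (fun k : Fin N => (k:ℕ) = 0)]
    have h2 : (univ.filter (fun k : Fin N => (k:ℕ) = 0)) = {(⟨0, by omega⟩ : Fin N)} := by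
      ext k; simp [Fin.ext_iff]
    rw [h2, Finset.sum_singleton, hγstar0 i]
    ring
  refine ⟨⟨hpos, hrowsum⟩, ?_⟩
  rintro γ ⟨hγpos, hγsum⟩
  -- expand L
  have expand : ∀ δ : Fin M → Fin N → ℝ, L δ =
      ∑ i, ∑ j, ((α/C * d i j) * δ i j + lam * |δ i j - a|) := by
    intro δ
    rw [hL δ]
    rw [Finset.mul_sum, Finset.mul_sum, Finset.mul_sum, ← Finset.sum_add_distrib]
    refine Finset.sum_congr rfl fun i _ => ?_
    rw [Finset.mul_sum, Finset.mul_sum, Finset.mul_sum, ← Finset.sum_add_distrib]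
    refine Finset.sum_congr rfl fun j _ => ?_
    rw [hlam_def, ha_def]
    ring
  rw [expand, expand]
  refine Finset.sum_le_sum fun i _ => ?_
  -- per-row inequality
  set cmin : ℝ := α/C * d i (σ i ⟨0, by omega⟩) with hcmin_def
  -- reindex
  have e1 : ∑ j, ((α/C * d i j) * γstar i j + lam * |γstar i j - a|)
      = ∑ k, ((α/C * d i (σ i k)) * γstar i (σ i k) + lam * |γstar i (σ i k) - a|) :=
    (Equiv.sum_comp (σ i) (fun j => (α/C * d i j) * γstar i j + lam * |γstar i j - a|)).symm
  have e2 : ∑ j, ((α/C * d i j) * γ i j + lam * |γ i j - a|)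
      = ∑ k, ((α/C * d i (σ i k)) * γ i (σ i k) + lam * |γ i (σ i k) - a|) :=
    (Equiv.sum_comp (σ i) (fun j => (α/C * d i j) * γ i j + lam * |γ i j - a|)).symm
  rw [e1, e2]
  have hsumsγ : ∑ k, γ i (σ i k) = 1 / (M:ℝ) := by
    rw [Equiv.sum_comp (σ i) (γ i)]; exact hγsum i
  have hsumsγs : ∑ k, γstar i (σ i k) = 1 / (M:ℝ) := by
    rw [Equiv.sum_comp (σ i) (γstar i)]; exact hrowsum i
  have step : ∀ k : Fin N,
      (α/C * d i (σ i k)) * γstar i (σ i k) + lam * |γstar i (σ i k) - a|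
        + (cmin + lam) * (γ i (σ i k) - γstar i (σ i k))
      ≤ (α/C * d i (σ i k)) * γ i (σ i k) + lam * |γ i (σ i k) - a| := by
    intro k
    have hmono : d i (σ i ⟨0, by omega⟩) ≤ d i (σ i k) :=
      hsort i (by simp [Fin.le_def] : (⟨0, by omega⟩ : Fin N) ≤ k)
    have hcle : cmin ≤ α/C * d i (σ i k) := by
      rw [hcmin_def]
      have : 0 < α / C := by positivity
      nlinarith
    apply key_ineq _ _ _ _ _ _ hlam (le_of_lt ha) (hγpos i (σ i k)) hcle
    by_cases hk : (k : ℕ) = 0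
    · right; right
      have hkz : k = (⟨0, by omega⟩ : Fin N) := Fin.ext hk
      constructor
      · rw [hkz, hcmin_def]
      · rw [hkz]; exact hv i
    · by_cases hth : d i (σ i k) - d i (σ i ⟨0, by omega⟩) < (1 - α) * C / α
      · right; left
        constructor
        · rw [hγstar i k hk, if_pos hth]
        · have : α/C * (d i (σ i k) - d i (σ i ⟨0, by omega⟩)) < α/C * ((1-α)*C/α) := by
            apply mul_lt_mul_of_pos_left hth (by positivity)
          have heq : α/C * ((1-α)*C/α) = 2 * lam := by
            rw [hlam_def]; field_simp
          nlinarith [mul_sub (α/C) (d i (σ i k)) (d i (σ i ⟨0, by omega⟩))]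
      · left
        constructor
        · rw [hγstar i k hk, if_neg hth]
        · push_neg at hth
          have : α/C * ((1-α)*C/α) ≤ α/C * (d i (σ i k) - d i (σ i ⟨0, by omega⟩)) := by
            apply mul_le_mul_of_nonneg_left hth (by positivity)
          have heq : α/C * ((1-α)*C/α) = 2 * lam := by
            rw [hlam_def]; field_simp
          nlinarith [mul_sub (α/C) (d i (σ i k)) (d i (σ i ⟨0, by omega⟩))]
  calc ∑ k, ((α/C * d i (σ i k)) * γstar i (σ i k) + lam * |γstar i (σ i k) - a|)
      = ∑ k, ((α/C * d i (σ i k)) * γstar i (σ i k) + lam * |γstar i (σ i k) - a|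
          + (cmin + lam) * (γ i (σ i k) - γstar i (σ i k))) := by
        have hz : ∑ k, (cmin + lam) * (γ i (σ i k) - γstar i (σ i k)) = 0 := by
          rw [← Finset.mul_sum, Finset.sum_sub_distrib, hsumsγ, hsumsγs]
          ring
        simp only [Finset.sum_add_distrib]
        rw [hz, add_zero]
    _ ≤ _ := Finset.sum_le_sum fun k _ => step k
end

section
/- Let the regularizer be G_KDE and assume s* ≤ s̄/2. Then γ* is feasible and L(γ*) ≤ L(γ) for every feasible γ ∈ ℝ^{M×N}. -/
open Finset

set_option maxHeartbeats 1600000 in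
/-- Theorem 2 (optimality part): with the KDE-based regularizer `G_KDE`, the water-filling
transport `γ*` at level `s*` is an optimal solution, assuming `s* ≤ s̄/2`. -/
theorem stmt_4 (M N : ℕ) (hM : 1 ≤ M) (hN : 1 ≤ N)
    (d : Fin M → Fin N → ℝ) (hd : ∀ i j, 0 ≤ d i j)
    (C α : ℝ) (hC : 0 < C) (hα0 : 0 ≤ α) (hα1 : α < 1)
    (σ : Fin M → Equiv.Perm (Fin N))
    (hsort : ∀ i, Monotone fun k => d i (σ i k))
    (ρ : Fin N → ℝ) (hρ : ∀ j, 0 < ρ j)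
    (sbar : ℝ) (hsbar : sbar = ∑ j, 1 / ρ j)
    -- `D i l` / `R i l` : sorted distances and inverse densities (0-indexed position `l`)
    (D : Fin M → ℕ → ℝ) (hD : ∀ i (l : Fin N), D i (l : ℕ) = d i (σ i l))
    (R : Fin M → ℕ → ℝ) (hR : ∀ i (l : Fin N), R i (l : ℕ) = 1 / ρ (σ i l))
    -- `S i k` is the paper's `s_k^i`
    (S : Fin M → ℕ → ℝ) (hS : ∀ i k, k ≤ N → S i k = ∑ l ∈ Finset.range k, R i l)
    -- the step functions `c_i` and their sum `c`
    (ci : Fin M → ℝ → ℝ)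
    (hci0 : ∀ i (s : ℝ), s ≤ S i 1 → ci i s = 0)
    (hci : ∀ i (s : ℝ) (k : ℕ), 2 ≤ k → k ≤ N → S i (k - 1) < s → s ≤ S i k →
      ci i s = ∑ l ∈ Finset.range (k - 1), (D i (k - 1) - D i l) * R i l)
    (c : ℝ → ℝ) (hc : ∀ s, c s = ∑ i, ci i s)
    -- the finite set `𝒮`
    (Scal : Set ℝ)
    (hScal : Scal = insert (0 : ℝ) {x : ℝ | ∃ i : Fin M, ∃ k, 1 ≤ k ∧ k ≤ N ∧ x = S i k})
    -- `s*` is the largest `s ∈ 𝒮` with `(α/C)·c(s) < (1-α)·M`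
    (sstar : ℝ) (hsstar1 : sstar ∈ Scal)
    (hsstar2 : (α / C) * c sstar < (1 - α) * (M : ℝ))
    (hsstar3 : ∀ s ∈ Scal, (α / C) * c s < (1 - α) * (M : ℝ) → s ≤ sstar)
    -- `K_i = max {k ∈ {0,…,N−1} : s_k^i ≤ s*}`
    (Ki : Fin M → ℕ)
    (hKi1 : ∀ i, Ki i ≤ N - 1)
    (hKi2 : ∀ i, S i (Ki i) ≤ sstar)
    (hKi3 : ∀ i k, k ≤ N - 1 → S i k ≤ sstar → k ≤ Ki i)
    -- the water-filling transport `γ*`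
    (γstar : Fin M → Fin N → ℝ)
    (hγstar : ∀ i (k : Fin N), γstar i (σ i k) =
      if (k : ℕ) < Ki i then 1 / ((M : ℝ) * sstar * ρ (σ i k))
      else if (k : ℕ) = Ki i then
        1 / (M : ℝ) - ∑ l ∈ Finset.range (Ki i), R i l / ((M : ℝ) * sstar)
      else 0)
    -- the objective with regularizer `G_KDE`
    (L : (Fin M → Fin N → ℝ) → ℝ)
    (hL : ∀ γ, L γ = (α / C) * (∑ i, ∑ j, γ i j * d i j)
      + (1 - α) * ((M : ℝ) * ⨆ i, ⨆ j, ρ j * |γ i j - (1 / ρ j) / ((M : ℝ) * sbar)|))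
    -- the assumption `s* ≤ s̄/2`
    (hshalf : sstar ≤ sbar / 2) :
    ((∀ i j, 0 ≤ γstar i j) ∧ (∀ i, ∑ j, γstar i j = 1 / (M : ℝ))) ∧
      ∀ γ : Fin M → Fin N → ℝ,
        ((∀ i j, 0 ≤ γ i j) ∧ (∀ i, ∑ j, γ i j = 1 / (M : ℝ))) → L γstar ≤ L γ := by
  haveI hneM : Nonempty (Fin M) := ⟨⟨0, hM⟩⟩
  haveI hneN : Nonempty (Fin N) := ⟨⟨0, hN⟩⟩
  have hM0 : (0:ℝ) < (M:ℝ) := by exact_mod_cast Nat.lt_of_lt_of_le Nat.zero_lt_one hM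
  have hMne : (M:ℝ) ≠ 0 := ne_of_gt hM0
  have hα1' : (0:ℝ) < 1 - α := by linarith
  have hαC : 0 ≤ α / C := div_nonneg hα0 hC.le
  have hρne : ∀ j, ρ j ≠ 0 := fun j => ne_of_gt (hρ j)
  have hRval : ∀ i l (hl : l < N), R i l = 1 / ρ (σ i ⟨l, hl⟩) := by
    intro i l hl
    have h := hR i ⟨l, hl⟩
    simpa using h
  have hRpos : ∀ i l, l < N → 0 < R i l := by
    intro i l hl
    rw [hRval i l hl]
    exact div_pos one_pos (hρ _)
  have hDd : ∀ i l (hl : l < N), D i l = d i (σ i ⟨l, hl⟩) := by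
    intro i l hl
    have h := hD i ⟨l, hl⟩
    simpa using h
  have hDmono : ∀ i l e, l ≤ e → e < N → D i l ≤ D i e := by
    intro i l e hle he
    rw [hDd i l (lt_of_le_of_lt hle he), hDd i e he]
    exact hsort i (by exact hle)
  have hSmono : ∀ i k₁ k₂, k₁ < k₂ → k₂ ≤ N → S i k₁ < S i k₂ := by
    intro i k₁ k₂ h hk₂
    rw [hS i k₁ (le_of_lt (lt_of_lt_of_le h hk₂)), hS i k₂ hk₂]
    refine Finset.sum_lt_sum_of_subset (Finset.range_subset_range.mpr h.le)
      (Finset.mem_range.mpr h) (by simp) (hRpos i k₁ (lt_of_lt_of_le h hk₂)) ?_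
    intro j hj _
    exact (hRpos i j (lt_of_lt_of_le (Finset.mem_range.mp hj) hk₂)).le
  have hS0 : ∀ i, S i 0 = 0 := fun i => by rw [hS i 0 (Nat.zero_le _)]; simp
  have hSle : ∀ i k₁ k₂, k₁ ≤ k₂ → k₂ ≤ N → S i k₁ ≤ S i k₂ := by
    intro i k₁ k₂ h hk₂
    rcases eq_or_lt_of_le h with rfl | h'
    · exact le_rfl
    · exact (hSmono i k₁ k₂ h' hk₂).le
  have hSN : ∀ i, S i N = sbar := by
    intro i
    rw [hS i N le_rfl, hsbar, ← Fin.sum_univ_eq_sum_range (R i) N,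
      ← Equiv.sum_comp (σ i) (fun j => 1 / ρ j)]
    exact Finset.sum_congr rfl fun l _ => hR i l
  have hsbar0 : 0 < sbar := by
    have h := hSmono ⟨0, hM⟩ 0 N hN le_rfl
    rwa [hS0, hSN] at h
  -- s* > 0
  have hs0 : 0 < sstar := by
    obtain ⟨i0, -, hi0⟩ := Finset.exists_min_image Finset.univ (fun i => S i 1)
      ⟨⟨0, hM⟩, Finset.mem_univ _⟩
    have hmem : S i0 1 ∈ Scal := by
      rw [hScal]
      exact Set.mem_insert_of_mem _ ⟨i0, 1, le_rfl, hN, rfl⟩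
    have hcz : c (S i0 1) = 0 := by
      rw [hc]
      exact Finset.sum_eq_zero fun i _ => hci0 i _ (hi0 i (Finset.mem_univ i))
    have hcond : (α/C) * c (S i0 1) < (1-α) * (M:ℝ) := by
      rw [hcz, mul_zero]
      exact mul_pos hα1' hM0
    have hle := hsstar3 _ hmem hcond
    have hpos : 0 < S i0 1 := by
      have h := hSmono i0 0 1 Nat.zero_lt_one hN
      rwa [hS0] at h
    linarith
  have hKilt : ∀ i, Ki i < N := fun i => lt_of_le_of_lt (hKi1 i) (Nat.sub_lt (by omega) one_pos)
  have hsfin : ∀ i, sstar < S i (Ki i + 1) := by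
    intro i
    by_cases h : Ki i + 1 ≤ N - 1
    · by_contra hcon
      push_neg at hcon
      have := hKi3 i (Ki i + 1) h hcon
      omega
    · have hKN : Ki i + 1 = N := by have := hKi1 i; omega
      rw [hKN, hSN]
      linarith
  -- handy constants
  set ustar : ℝ := 1 / ((M:ℝ) * sstar) with hustar
  set b : ℝ := 1 / ((M:ℝ) * sbar) with hbdef
  have hust0 : 0 < ustar := by rw [hustar]; positivity
  have hb0 : 0 < b := by rw [hbdef]; positivity
  have hus : ustar * sstar = 1 / (M:ℝ) := by
    rw [hustar]; field_simp
  have hρb : ∀ j, ρ j * ((1/ρ j)/((M:ℝ)*sbar)) = b := by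
    intro j
    rw [hbdef, div_div, mul_one_div, div_mul_cancel_left₀ (hρne j), one_div]
  have h2b : 2 * b ≤ ustar := by
    rw [hbdef, hustar, mul_one_div, div_le_div_iff₀ (by positivity) (by positivity)]
    nlinarith [mul_nonneg hM0.le (by linarith : (0:ℝ) ≤ sbar - 2*sstar)]
  -- γ* in terms of ranks
  have hγv : ∀ i (k : Fin N), γstar i (σ i k) =
      if (k : ℕ) < Ki i then R i (k:ℕ) * ustar
      else if (k : ℕ) = Ki i then 1/(M:ℝ) - S i (Ki i) * ustar
      else 0 := by
    intro i k
    rw [hγstar i k]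
    by_cases h1 : (k:ℕ) < Ki i
    · rw [if_pos h1, if_pos h1, hR i k, hustar]
      field_simp
    · rw [if_neg h1, if_neg h1]
      by_cases h2 : (k:ℕ) = Ki i
      · rw [if_pos h2, if_pos h2, sub_right_inj, hS i (Ki i) (hKilt i).le, Finset.sum_mul]
        exact Finset.sum_congr rfl fun l _ => by rw [hustar, mul_one_div, div_eq_mul_one_div]
      · rw [if_neg h2, if_neg h2]
  have hres0 : ∀ i, 0 ≤ 1/(M:ℝ) - S i (Ki i) * ustar := by
    intro i
    have h1 : S i (Ki i) * ustar ≤ sstar * ustar := mul_le_mul_of_nonneg_right (hKi2 i) hust0.le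
    have h2 : sstar * ustar = 1/(M:ℝ) := by rw [mul_comm]; exact hus
    linarith
  have hγnn : ∀ i j, 0 ≤ γstar i j := by
    intro i j
    have hj : γstar i j = γstar i (σ i ((σ i).symm j)) := by rw [Equiv.apply_symm_apply]
    rw [hj, hγv]
    split_ifs with h1 h2
    · exact (mul_pos (hRpos i _ ((σ i).symm j).isLt) hust0).le
    · exact hres0 i
    · exact le_rfl
  have hγrowsum : ∀ i, ∑ j, γstar i j = 1 / (M:ℝ) := by
    intro i
    rw [← Equiv.sum_comp (σ i) (fun j => γstar i j)]
    have hcong : ∀ k : Fin N, γstar i (σ i k) =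
        (fun l => if l < Ki i then R i l * ustar
          else if l = Ki i then 1/(M:ℝ) - S i (Ki i) * ustar else 0) (k:ℕ) := fun k => hγv i k
    rw [Finset.sum_congr rfl fun k _ => hcong k,
      Fin.sum_univ_eq_sum_range (fun l => if l < Ki i then R i l * ustar
          else if l = Ki i then 1/(M:ℝ) - S i (Ki i) * ustar else 0) N]
    rw [← Finset.sum_subset (Finset.range_subset_range.mpr (hKilt i)) (by
      intro x hx hx'
      simp only [Finset.mem_range] at hx hx'
      rw [if_neg (by omega), if_neg (by omega)])]
    rw [Finset.sum_range_succ, if_neg (lt_irrefl _), if_pos rfl]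
    have hsum : ∑ l ∈ Finset.range (Ki i),
        (if l < Ki i then R i l * ustar else if l = Ki i then 1/(M:ℝ) - S i (Ki i) * ustar else 0)
        = S i (Ki i) * ustar := by
      rw [hS i (Ki i) (hKilt i).le, Finset.sum_mul]
      exact Finset.sum_congr rfl fun l hl => by rw [if_pos (Finset.mem_range.mp hl)]
    rw [hsum]
    ring
  -- transport cost of γ*
  have hrowstar : ∀ i, ∑ j, γstar i j * d i j
      = D i (Ki i)/(M:ℝ) - ustar * ∑ l ∈ Finset.range (Ki i), (D i (Ki i) - D i l) * R i l := by
    intro i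
    have e1 : ∑ l ∈ Finset.range (Ki i), (D i (Ki i) - D i l) * R i l
        = D i (Ki i) * S i (Ki i) - ∑ l ∈ Finset.range (Ki i), D i l * R i l := by
      rw [hS i (Ki i) (hKilt i).le, Finset.mul_sum, ← Finset.sum_sub_distrib]
      exact Finset.sum_congr rfl fun l _ => by ring
    rw [← Equiv.sum_comp (σ i) (fun j => γstar i j * d i j)]
    have hcong : ∀ k : Fin N, γstar i (σ i k) * d i (σ i k) =
        (fun l => (if l < Ki i then R i l * ustar
          else if l = Ki i then 1/(M:ℝ) - S i (Ki i) * ustar else 0) * D i l) (k:ℕ) := by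
      intro k
      rw [hγv i k, ← hD i k]
    rw [Finset.sum_congr rfl fun k _ => hcong k,
      Fin.sum_univ_eq_sum_range (fun l => (if l < Ki i then R i l * ustar
          else if l = Ki i then 1/(M:ℝ) - S i (Ki i) * ustar else 0) * D i l) N]
    rw [← Finset.sum_subset (Finset.range_subset_range.mpr (hKilt i)) (by
      intro x hx hx'
      simp only [Finset.mem_range] at hx hx'
      rw [if_neg (by omega), if_neg (by omega), zero_mul])]
    rw [Finset.sum_range_succ, if_neg (lt_irrefl _), if_pos rfl]
    have hsum : ∑ l ∈ Finset.range (Ki i),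
        (if l < Ki i then R i l * ustar else if l = Ki i then 1/(M:ℝ) - S i (Ki i) * ustar else 0)
          * D i l
        = ustar * ∑ l ∈ Finset.range (Ki i), D i l * R i l := by
      rw [Finset.mul_sum]
      exact Finset.sum_congr rfl fun l hl => by
        rw [if_pos (Finset.mem_range.mp hl)]; ring
    rw [hsum, e1]
    ring
  -- abs helper
  have habs : ∀ (x A bb : ℝ), 0 ≤ x → x ≤ A → 0 ≤ bb → 2*bb ≤ A → |x - bb| ≤ A - bb := by
    intro x A bb h1 h2 h3 h4
    rw [abs_le]
    constructor <;> linarith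
  -- sup bound for γ*
  have hsupstar : (⨆ i, ⨆ j, ρ j * |γstar i j - (1 / ρ j) / ((M:ℝ) * sbar)|) ≤ ustar - b := by
    apply ciSup_le
    intro i
    apply ciSup_le
    intro j
    have hrw : ρ j * |γstar i j - (1/ρ j) / ((M:ℝ)*sbar)| = |ρ j * γstar i j - b| := by
      have e : ρ j * (γstar i j - (1/ρ j) / ((M:ℝ)*sbar)) = ρ j * γstar i j - b := by
        rw [mul_sub, hρb]
      calc ρ j * |γstar i j - (1/ρ j) / ((M:ℝ)*sbar)|
          = |ρ j| * |γstar i j - (1/ρ j) / ((M:ℝ)*sbar)| := by rw [abs_of_pos (hρ j)]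
        _ = |ρ j * (γstar i j - (1/ρ j) / ((M:ℝ)*sbar))| := (abs_mul _ _).symm
        _ = |ρ j * γstar i j - b| := by rw [e]
    rw [hrw]
    have hcap : ρ j * γstar i j ≤ ustar := by
      have hj : γstar i j = γstar i (σ i ((σ i).symm j)) := by rw [Equiv.apply_symm_apply]
      have hj2 : ρ j = ρ (σ i ((σ i).symm j)) := by rw [Equiv.apply_symm_apply]
      rw [hj, hj2, hγv]
      set k := (σ i).symm j with hk
      split_ifs with h1 h2
      · have hρR : ρ (σ i k) * R i (k:ℕ) = 1 := by
          rw [hRval i (k:ℕ) k.isLt]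
          have : (⟨(k:ℕ), k.isLt⟩ : Fin N) = k := by simp
          rw [this]
          exact mul_one_div_cancel (hρne _)
        calc ρ (σ i k) * (R i (k:ℕ) * ustar) = (ρ (σ i k) * R i (k:ℕ)) * ustar := by ring
          _ = ustar := by rw [hρR, one_mul]
          _ ≤ ustar := le_rfl
      · -- residual cell
        have hSsucc : S i (Ki i + 1) = S i (Ki i) + R i (Ki i) := by
          rw [hS i (Ki i + 1) (by have := hKilt i; omega), hS i (Ki i) (hKilt i).le,
            Finset.sum_range_succ]
        have h3 : 1/(M:ℝ) ≤ (S i (Ki i) + R i (Ki i)) * ustar := by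
          calc 1/(M:ℝ) = sstar * ustar := by rw [mul_comm]; exact hus.symm
            _ ≤ (S i (Ki i) + R i (Ki i)) * ustar := by
                rw [← hSsucc]
                exact mul_le_mul_of_nonneg_right (hsfin i).le hust0.le
        have h4 : 1/(M:ℝ) - S i (Ki i) * ustar ≤ R i (Ki i) * ustar := by nlinarith [h3]
        have h5 : ρ (σ i k) * (1/(M:ℝ) - S i (Ki i) * ustar) ≤ ρ (σ i k) * (R i (Ki i) * ustar) :=
          mul_le_mul_of_nonneg_left h4 (hρ _).le
        have hρR : ρ (σ i k) * R i (Ki i) = 1 := by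
          rw [← h2, hRval i (k:ℕ) k.isLt]
          have : (⟨(k:ℕ), k.isLt⟩ : Fin N) = k := by simp
          rw [this]
          exact mul_one_div_cancel (hρne _)
        calc ρ (σ i k) * (1/(M:ℝ) - S i (Ki i) * ustar) ≤ ρ (σ i k) * (R i (Ki i) * ustar) := h5
          _ = (ρ (σ i k) * R i (Ki i)) * ustar := by ring
          _ = ustar := by rw [hρR, one_mul]
      · rw [mul_zero]; exact hust0.le
    exact habs _ _ _ (mul_nonneg (hρ j).le (hγnn i j)) hcap hb0.le h2b
  -- upper bound on L γ*
  have hLstar : L γstar ≤ (α/C) * (∑ i, (D i (Ki i)/(M:ℝ)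
        - ustar * ∑ l ∈ Finset.range (Ki i), (D i (Ki i) - D i l) * R i l))
      + (1-α) * ((M:ℝ)*ustar - (M:ℝ)*b) := by
    rw [hL]
    have h1 : ∑ i, ∑ j, γstar i j * d i j = ∑ i, (D i (Ki i)/(M:ℝ)
        - ustar * ∑ l ∈ Finset.range (Ki i), (D i (Ki i) - D i l) * R i l) :=
      Finset.sum_congr rfl fun i _ => hrowstar i
    rw [h1]
    have h2 : (M:ℝ) * (⨆ i, ⨆ j, ρ j * |γstar i j - (1 / ρ j) / ((M:ℝ) * sbar)|)
        ≤ (M:ℝ)*ustar - (M:ℝ)*b := by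
      have h3 := mul_le_mul_of_nonneg_left hsupstar hM0.le
      rw [mul_sub] at h3
      exact h3
    have h4 := mul_le_mul_of_nonneg_left h2 hα1'.le
    linarith
  -- Fact A : (1-α) M ≤ (α/C) Σ_i cc_i(K_i+1)
  have hfactA : (1-α) * (M:ℝ)
      ≤ (α/C) * ∑ i, ∑ l ∈ Finset.range (Ki i), (D i (Ki i) - D i l) * R i l := by
    obtain ⟨i1, -, hi1⟩ := Finset.exists_min_image Finset.univ (fun i => S i (Ki i + 1))
      ⟨⟨0, hM⟩, Finset.mem_univ _⟩
    have hsp_mem : S i1 (Ki i1 + 1) ∈ Scal := by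
      rw [hScal]
      exact Set.mem_insert_of_mem _ ⟨i1, Ki i1 + 1, by omega, by have := hKilt i1; omega, rfl⟩
    have hsp_gt : sstar < S i1 (Ki i1 + 1) := hsfin i1
    have hsp_ci : ∀ i, ci i (S i1 (Ki i1 + 1))
        = ∑ l ∈ Finset.range (Ki i), (D i (Ki i) - D i l) * R i l := by
      intro i
      have hsp_le : S i1 (Ki i1 + 1) ≤ S i (Ki i + 1) := hi1 i (Finset.mem_univ i)
      by_cases hK0 : Ki i = 0
      · rw [hci0 i _ (by rw [hK0] at hsp_le; simpa using hsp_le), hK0]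
        simp
      · have h := hci i (S i1 (Ki i1 + 1)) (Ki i + 1) (by omega) (by have := hKilt i; omega)
          (by simpa [Nat.add_sub_cancel] using lt_of_le_of_lt (hKi2 i) hsp_gt) hsp_le
        simpa [Nat.add_sub_cancel] using h
    have hsp_c : c (S i1 (Ki i1 + 1))
        = ∑ i, ∑ l ∈ Finset.range (Ki i), (D i (Ki i) - D i l) * R i l := by
      rw [hc]
      exact Finset.sum_congr rfl fun i _ => hsp_ci i
    by_contra hcon
    push_neg at hcon
    have := hsstar3 _ hsp_mem (by rw [hsp_c]; exact hcon)
    linarith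
  -- increment identity
  have hincE : ∀ i e, e + 1 ≤ N →
      ∑ l ∈ Finset.range (e+1), (D i (e+1) - D i l) * R i l
        = (∑ l ∈ Finset.range e, (D i e - D i l) * R i l) + (D i (e+1) - D i e) * S i (e+1) := by
    intro i e h
    have hs' : S i (e+1) = ∑ l ∈ Finset.range e, R i l + R i e := by
      rw [hS i (e+1) h, Finset.sum_range_succ]
    rw [Finset.sum_range_succ, hs']
    have hsum : ∑ l ∈ Finset.range e, (D i (e+1) - D i l) * R i l
        = ∑ l ∈ Finset.range e, ((D i e - D i l) * R i l + (D i (e+1) - D i e) * R i l) :=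
      Finset.sum_congr rfl fun l _ => by ring
    rw [hsum, Finset.sum_add_distrib, ← Finset.mul_sum]
    ring
  -- choice of the proper index κ i at s*
  have hκ : ∀ i, ∃ k : ℕ, 1 ≤ k ∧ k ≤ N ∧
      ci i sstar = ∑ l ∈ Finset.range (k-1), (D i (k-1) - D i l) * R i l ∧
      (D i (k-1)/(M:ℝ) - ustar * ∑ l ∈ Finset.range (k-1), (D i (k-1) - D i l) * R i l
        = D i (Ki i)/(M:ℝ) - ustar * ∑ l ∈ Finset.range (Ki i), (D i (Ki i) - D i l) * R i l) := by
    intro i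
    by_cases hgt : S i (Ki i) < sstar
    · refine ⟨Ki i + 1, by omega, by have := hKilt i; omega, ?_, by simp⟩
      by_cases hK0 : Ki i = 0
      · rw [hci0 i sstar (by rw [show (1:ℕ) = Ki i + 1 from by omega]; exact (hsfin i).le)]
        simp [hK0]
      · have h := hci i sstar (Ki i + 1) (by omega) (by have := hKilt i; omega)
          (by simpa [Nat.add_sub_cancel] using hgt) (hsfin i).le
        simpa [Nat.add_sub_cancel] using h
    · push_neg at hgt
      have heq : S i (Ki i) = sstar := le_antisymm (hKi2 i) hgt
      have hK1 : 1 ≤ Ki i := by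
        by_contra hcc
        push_neg at hcc
        have h0 : Ki i = 0 := by omega
        rw [h0, hS0] at heq
        linarith
      refine ⟨Ki i, hK1, (hKilt i).le, ?_, ?_⟩
      · by_cases hK1' : Ki i = 1
        · rw [hci0 i sstar (by rw [← hK1']; exact hgt)]
          simp [hK1']
        · exact hci i sstar (Ki i) (by omega) (hKilt i).le
            (by rw [← heq]; exact hSmono i (Ki i - 1) (Ki i) (by omega) (hKilt i).le) hgt
      · have h := hincE i (Ki i - 1) (by have := hKilt i; omega)
        rw [show Ki i - 1 + 1 = Ki i from by omega] at h
        rw [h, heq]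
        have husr : ustar * sstar = 1/(M:ℝ) := hus
        linear_combination (D i (Ki i) - D i (Ki i - 1)) * husr
  choose κ hκ1 hκ2 hκ3 hκ4 using hκ
  have hcstar : c sstar = ∑ i, ∑ l ∈ Finset.range (κ i - 1), (D i (κ i - 1) - D i l) * R i l := by
    rw [hc]
    exact Finset.sum_congr rfl fun i _ => hκ3 i
  -- row lower bound for arbitrary feasible capped plans
  have hrowLB : ∀ (γ : Fin M → Fin N → ℝ), (∀ i j, 0 ≤ γ i j) → (∀ i, ∑ j, γ i j = 1/(M:ℝ)) →
      ∀ (u : ℝ), (∀ i j, ρ j * γ i j ≤ u) → ∀ (i : Fin M) (k : ℕ), 1 ≤ k → k ≤ N →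
      D i (k-1)/(M:ℝ) - u * ∑ l ∈ Finset.range (k-1), (D i (k-1) - D i l) * R i l
        ≤ ∑ j, γ i j * d i j := by
    intro γ hnn hrow u hcap i k hk1 hkN
    set e := k - 1 with he
    have heN : e < N := by omega
    have hperm : ∑ j, γ i j * d i j = ∑ l : Fin N, γ i (σ i l) * D i (l:ℕ) := by
      rw [← Equiv.sum_comp (σ i) (fun j => γ i j * d i j)]
      exact Finset.sum_congr rfl fun l _ => by rw [hD i l]
    have hpermsum : ∑ l : Fin N, γ i (σ i l) = 1/(M:ℝ) := by
      rw [Equiv.sum_comp (σ i) (fun j => γ i j)]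
      exact hrow i
    have hdec : ∑ l : Fin N, γ i (σ i l) * D i (l:ℕ)
        = D i e / (M:ℝ) + ∑ l : Fin N, γ i (σ i l) * (D i (l:ℕ) - D i e) := by
      have : D i e / (M:ℝ) = D i e * (1/(M:ℝ)) := by ring
      rw [this, ← hpermsum, Finset.mul_sum, ← Finset.sum_add_distrib]
      exact Finset.sum_congr rfl fun l _ => by ring
    have hstep1 : ∑ l : Fin N, (if (l:ℕ) < e then (u * R i (l:ℕ)) * (D i (l:ℕ) - D i e) else 0)
        ≤ ∑ l : Fin N, γ i (σ i l) * (D i (l:ℕ) - D i e) := by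
      apply Finset.sum_le_sum
      intro l _
      by_cases hl : (l:ℕ) < e
      · rw [if_pos hl]
        have hD' : D i (l:ℕ) - D i e ≤ 0 := by
          have := hDmono i (l:ℕ) e hl.le heN
          linarith
        have hγcap : γ i (σ i l) ≤ u * R i (l:ℕ) := by
          have h1 := hcap i (σ i l)
          have h2 : R i (l:ℕ) = 1 / ρ (σ i l) := hR i l
          rw [h2, mul_one_div, le_div_iff₀ (hρ _)]
          linarith [h1, mul_comm (γ i (σ i l)) (ρ (σ i l))]
        exact mul_le_mul_of_nonpos_right hγcap hD'
      · rw [if_neg hl]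
        push_neg at hl
        have h0 : 0 ≤ D i (l:ℕ) - D i e := by
          have := hDmono i e (l:ℕ) hl l.isLt
          linarith
        exact mul_nonneg (hnn i _) h0
    have hstep2 : ∑ l : Fin N, (if (l:ℕ) < e then (u * R i (l:ℕ)) * (D i (l:ℕ) - D i e) else 0)
        = - (u * ∑ l ∈ Finset.range e, (D i e - D i l) * R i l) := by
      rw [Fin.sum_univ_eq_sum_range (fun m => if m < e then (u * R i m) * (D i m - D i e) else 0) N]
      rw [← Finset.sum_subset (Finset.range_subset_range.mpr heN.le) (by
        intro x hx hx'
        simp only [Finset.mem_range] at hx hx'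
        rw [if_neg (by omega)])]
      rw [Finset.mul_sum, ← Finset.sum_neg_distrib]
      exact Finset.sum_congr rfl fun l hl => by
        rw [if_pos (Finset.mem_range.mp hl)]
        ring
    rw [hperm, hdec]
    have h := hstep1
    rw [hstep2] at h
    linarith
  -- final assembly
  refine ⟨⟨hγnn, hγrowsum⟩, ?_⟩
  rintro γ ⟨hg1, hg2⟩
  have hbdd1 : ∀ i : Fin M, BddAbove (Set.range fun j => ρ j * |γ i j - (1/ρ j) / ((M:ℝ)*sbar)|) :=
    fun i => Set.Finite.bddAbove (Set.finite_range _)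
  have hbdd2 : BddAbove (Set.range fun i => ⨆ j, ρ j * |γ i j - (1/ρ j) / ((M:ℝ)*sbar)|) :=
    Set.Finite.bddAbove (Set.finite_range _)
  have htge : ∀ i j, ρ j * |γ i j - (1/ρ j) / ((M:ℝ)*sbar)|
      ≤ ⨆ i, ⨆ j, ρ j * |γ i j - (1/ρ j) / ((M:ℝ)*sbar)| :=
    fun i j => le_trans (le_ciSup (hbdd1 i) j) (le_ciSup hbdd2 i)
  set t := ⨆ i, ⨆ j, ρ j * |γ i j - (1/ρ j) / ((M:ℝ)*sbar)| with htdef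
  have hcapu : ∀ i j, ρ j * γ i j ≤ b + t := by
    intro i j
    have h1 := htge i j
    have h2 : ρ j * (γ i j - (1/ρ j) / ((M:ℝ)*sbar)) = ρ j * γ i j - b := by
      rw [mul_sub, hρb]
    have h3 : ρ j * (γ i j - (1/ρ j)/((M:ℝ)*sbar)) ≤ ρ j * |γ i j - (1/ρ j)/((M:ℝ)*sbar)| :=
      mul_le_mul_of_nonneg_left (le_abs_self _) (hρ j).le
    rw [h2] at h3
    linarith
  set u := b + t with hudef
  have hMt : (M:ℝ) * t = (M:ℝ)*u - (M:ℝ)*b := by rw [hudef]; ring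
  have hsplit1 : ∀ v : ℝ, ∑ i, (D i (Ki i)/(M:ℝ)
        - v * ∑ l ∈ Finset.range (Ki i), (D i (Ki i) - D i l) * R i l)
      = (∑ i, D i (Ki i))/(M:ℝ)
        - v * ∑ i, ∑ l ∈ Finset.range (Ki i), (D i (Ki i) - D i l) * R i l := by
    intro v
    rw [Finset.sum_sub_distrib, ← Finset.mul_sum, Finset.sum_div]
  have hsplitκ : ∀ v : ℝ, ∑ i, (D i (κ i - 1)/(M:ℝ)
        - v * ∑ l ∈ Finset.range (κ i - 1), (D i (κ i - 1) - D i l) * R i l)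
      = (∑ i, D i (κ i - 1))/(M:ℝ)
        - v * ∑ i, ∑ l ∈ Finset.range (κ i - 1), (D i (κ i - 1) - D i l) * R i l := by
    intro v
    rw [Finset.sum_sub_distrib, ← Finset.mul_sum, Finset.sum_div]
  have hLs := hLstar
  rw [hsplit1 ustar] at hLs
  have hEq : (∑ i, D i (κ i - 1))/(M:ℝ)
        - ustar * ∑ i, ∑ l ∈ Finset.range (κ i - 1), (D i (κ i - 1) - D i l) * R i l
      = (∑ i, D i (Ki i))/(M:ℝ)
        - ustar * ∑ i, ∑ l ∈ Finset.range (Ki i), (D i (Ki i) - D i l) * R i l := by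
    rw [← hsplitκ ustar, ← hsplit1 ustar]
    exact Finset.sum_congr rfl fun i _ => hκ4 i
  rw [hL γ, ← htdef]
  clear_value ustar b t u
  set Q1 := ∑ i, ∑ l ∈ Finset.range (Ki i), (D i (Ki i) - D i l) * R i l with hQ1def
  set Qκ := ∑ i, ∑ l ∈ Finset.range (κ i - 1), (D i (κ i - 1) - D i l) * R i l with hQκdef
  set E1 := (∑ i, D i (Ki i)) with hE1def
  set Eκ := (∑ i, D i (κ i - 1)) with hEκdef
  set Tg := ∑ i, ∑ j, γ i j * d i j with hTgdef
  set Lg := L γstar with hLgdef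
  clear_value Q1 Qκ E1 Eκ Tg Lg
  rcases le_total u ustar with hcase | hcase
  · -- u ≤ ustar : use indices Ki i + 1
    have hT : ∑ i, (D i (Ki i)/(M:ℝ)
          - u * ∑ l ∈ Finset.range (Ki i), (D i (Ki i) - D i l) * R i l)
        ≤ ∑ i, ∑ j, γ i j * d i j := by
      apply Finset.sum_le_sum
      intro i _
      have h := hrowLB γ hg1 hg2 u hcapu i (Ki i + 1) (by omega) (by have := hKilt i; omega)
      simpa [Nat.add_sub_cancel] using h
    rw [hsplit1 u, ← hTgdef] at hT
    have hcost := mul_le_mul_of_nonneg_left hT hαC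
    have hbr : 0 ≤ (ustar - u) * ((α/C) * Q1 - (1-α)*(M:ℝ)) :=
      mul_nonneg (by linarith only [hcase]) (by linarith only [hfactA])
    rw [hMt]
    nlinarith only [hLs, hcost, hbr]
  · -- ustar ≤ u : use indices κ i
    have hT : ∑ i, (D i (κ i - 1)/(M:ℝ)
          - u * ∑ l ∈ Finset.range (κ i - 1), (D i (κ i - 1) - D i l) * R i l)
        ≤ ∑ i, ∑ j, γ i j * d i j := by
      apply Finset.sum_le_sum
      intro i _
      exact hrowLB γ hg1 hg2 u hcapu i (κ i) (hκ1 i) (hκ2 i)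
    rw [hsplitκ u, ← hTgdef] at hT
    have hcost := mul_le_mul_of_nonneg_left hT hαC
    have hQκ : (α/C) * Qκ < (1-α)*(M:ℝ) := by
      rw [← hcstar]
      exact hsstar2
    have hbr : 0 ≤ (u - ustar) * ((1-α)*(M:ℝ) - (α/C) * Qκ) :=
      mul_nonneg (by linarith only [hcase]) (by linarith only [hQκ])
    rw [← hEq] at hLs
    rw [hMt]
    nlinarith only [hLs, hcost, hbr]
end

section
/- Let the regularizer be G_KDE and assume s* ≤ s̄/2. Assume moreover that there is no s ∈ 𝒮 with (α/C)·c(s) = (1−α)·M, that for no i ∈ [M] with K_i ≥ 1 is d_{i j_{K_i}^i} = d_{i j_{K_i+1}^i}, and that for no i ∈ [M] with K_i + 2 ≤ N is d_{i j_{K_i+1}^i} = d_{i j_{K_i+2}^i}. Then γ* is the unique minimizer of L over feasible matrices: L(γ*) < L(γ) for every feasible γ ≠ γ*. -/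
open Finset

set_option maxHeartbeats 4000000

lemma aux_range_fin {N m : ℕ} (hm : m ≤ N) (F : ℕ → ℝ) :
    ∑ l ∈ Finset.range m, F l = ∑ l : Fin N, (if (l : ℕ) < m then F l else 0) := by
  rw [Fin.sum_univ_eq_sum_range (fun l => if l < m then F l else 0) N]
  rw [← Finset.sum_subset (Finset.range_subset_range.2 hm) (fun x _ hx => by
    simp [Finset.mem_range] at hx; simp [if_neg (by omega : ¬ x < m)])]
  exact Finset.sum_congr rfl fun x hx => by
    simp [Finset.mem_range] at hx; simp [if_pos hx]

lemma aux_pivot {N : ℕ} (f g : Fin N → ℝ) (dd : ℕ → ℝ) (m : ℕ)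
    (hsum : ∑ l, f l = ∑ l, g l) :
    ∑ l : Fin N, (f l - g l) * dd (l : ℕ)
      = ∑ l : Fin N, (f l - g l) * (dd (l : ℕ) - dd m) := by
  have : ∑ l : Fin N, (f l - g l) * (dd (l : ℕ) - dd m)
      = ∑ l : Fin N, (f l - g l) * dd (l : ℕ) - (∑ l, f l - ∑ l, g l) * dd m := by
    simp only [mul_sub, sub_mul]
    rw [Finset.sum_sub_distrib, Finset.sum_sub_distrib, Finset.sum_sub_distrib,
      ← Finset.sum_mul, ← Finset.sum_mul]
  rw [this, hsum]; ring

/-- The exchange/pivot inequality for one row. -/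
lemma aux_row {N : ℕ} (f g : Fin N → ℝ) (dd rr : ℕ → ℝ) (m : ℕ) (hm : m < N) (β βs : ℝ)
    (hsum : ∑ l, f l = ∑ l, g l)
    (hcap : ∀ l : Fin N, f l ≤ β * rr (l : ℕ))
    (hf0 : ∀ l : Fin N, 0 ≤ f l)
    (hg : ∀ l : Fin N, (l : ℕ) < m → g l = βs * rr (l : ℕ))
    (hg0 : ∀ l : Fin N, m < (l : ℕ) → g l = 0)
    (hdm : ∀ a b : Fin N, (a : ℕ) ≤ (b : ℕ) → dd (a : ℕ) ≤ dd (b : ℕ)) :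
    (β - βs) * ∑ l ∈ Finset.range m, (dd l - dd m) * rr l
      ≤ ∑ l : Fin N, (f l - g l) * dd (l : ℕ) := by
  rw [aux_pivot f g dd m hsum, Finset.mul_sum, aux_range_fin hm.le]
  apply Finset.sum_le_sum
  intro l _
  rcases lt_trichotomy (l : ℕ) m with h | h | h
  · rw [if_pos h]
    have h1 : f l - g l ≤ (β - βs) * rr (l : ℕ) := by
      rw [hg l h]; have := hcap l; linarith [hcap l]
    have h2 : dd (l : ℕ) - dd m ≤ 0 := by
      have := hdm l ⟨m, hm⟩ (by simpa using h.le); simp at this; linarith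
    calc (β - βs) * ((dd (l:ℕ) - dd m) * rr (l:ℕ))
        = ((β - βs) * rr (l:ℕ)) * (dd (l:ℕ) - dd m) := by ring
      _ ≤ (f l - g l) * (dd (l:ℕ) - dd m) :=
          mul_le_mul_of_nonpos_right h1 h2
  · rw [if_neg (by omega)]
    have : dd (l : ℕ) - dd m = 0 := by rw [h]; ring
    rw [this, mul_zero]
  · rw [if_neg (by omega)]
    have h1 : 0 ≤ f l - g l := by rw [hg0 l h]; simpa using hf0 l
    have h2 : 0 ≤ dd (l : ℕ) - dd m := by
      have := hdm ⟨m, hm⟩ l (by simpa using h.le); simp at this; linarith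
    positivity

/-- Theorem 2 (uniqueness part): with `G_KDE`, under no-equality and no-tie conditions,
the water-filling transport `γ*` at level `s*` is the unique minimizer. -/
theorem stmt_5 (M N : ℕ) (hM : 1 ≤ M) (hN : 1 ≤ N)
    (d : Fin M → Fin N → ℝ) (hd : ∀ i j, 0 ≤ d i j)
    (C α : ℝ) (hC : 0 < C) (hα0 : 0 ≤ α) (hα1 : α < 1)
    (σ : Fin M → Equiv.Perm (Fin N))
    (hsort : ∀ i, Monotone fun k => d i (σ i k))
    (ρ : Fin N → ℝ) (hρ : ∀ j, 0 < ρ j)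
    (sbar : ℝ) (hsbar : sbar = ∑ j, 1 / ρ j)
    -- `D i l` / `R i l` : sorted distances and inverse densities (0-indexed position `l`)
    (D : Fin M → ℕ → ℝ) (hD : ∀ i (l : Fin N), D i (l : ℕ) = d i (σ i l))
    (R : Fin M → ℕ → ℝ) (hR : ∀ i (l : Fin N), R i (l : ℕ) = 1 / ρ (σ i l))
    -- `S i k` is the paper's `s_k^i`
    (S : Fin M → ℕ → ℝ) (hS : ∀ i k, k ≤ N → S i k = ∑ l ∈ Finset.range k, R i l)
    -- the step functions `c_i` and their sum `c`
    (ci : Fin M → ℝ → ℝ)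
    (hci0 : ∀ i (s : ℝ), s ≤ S i 1 → ci i s = 0)
    (hci : ∀ i (s : ℝ) (k : ℕ), 2 ≤ k → k ≤ N → S i (k - 1) < s → s ≤ S i k →
      ci i s = ∑ l ∈ Finset.range (k - 1), (D i (k - 1) - D i l) * R i l)
    (c : ℝ → ℝ) (hc : ∀ s, c s = ∑ i, ci i s)
    -- the finite set `𝒮`
    (Scal : Set ℝ)
    (hScal : Scal = insert (0 : ℝ) {x : ℝ | ∃ i : Fin M, ∃ k, 1 ≤ k ∧ k ≤ N ∧ x = S i k})
    -- `s*` is the largest `s ∈ 𝒮` with `(α/C)·c(s) < (1-α)·M`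
    (sstar : ℝ) (hsstar1 : sstar ∈ Scal)
    (hsstar2 : (α / C) * c sstar < (1 - α) * (M : ℝ))
    (hsstar3 : ∀ s ∈ Scal, (α / C) * c s < (1 - α) * (M : ℝ) → s ≤ sstar)
    -- `K_i = max {k ∈ {0,…,N−1} : s_k^i ≤ s*}`
    (Ki : Fin M → ℕ)
    (hKi1 : ∀ i, Ki i ≤ N - 1)
    (hKi2 : ∀ i, S i (Ki i) ≤ sstar)
    (hKi3 : ∀ i k, k ≤ N - 1 → S i k ≤ sstar → k ≤ Ki i)
    -- the water-filling transport `γ*`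
    (γstar : Fin M → Fin N → ℝ)
    (hγstar : ∀ i (k : Fin N), γstar i (σ i k) =
      if (k : ℕ) < Ki i then 1 / ((M : ℝ) * sstar * ρ (σ i k))
      else if (k : ℕ) = Ki i then
        1 / (M : ℝ) - ∑ l ∈ Finset.range (Ki i), R i l / ((M : ℝ) * sstar)
      else 0)
    -- the objective with regularizer `G_KDE`
    (L : (Fin M → Fin N → ℝ) → ℝ)
    (hL : ∀ γ, L γ = (α / C) * (∑ i, ∑ j, γ i j * d i j)
      + (1 - α) * ((M : ℝ) * ⨆ i, ⨆ j, ρ j * |γ i j - (1 / ρ j) / ((M : ℝ) * sbar)|))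
    -- the assumption `s* ≤ s̄/2`
    (hshalf : sstar ≤ sbar / 2)
    -- no `s ∈ 𝒮` attains equality in the trade-off condition:
    (hnoeq : ∀ s ∈ Scal, (α / C) * c s ≠ (1 - α) * (M : ℝ))
    -- no tie `d_{i j_{K_i}^i} = d_{i j_{K_i+1}^i}` (paper indices):
    (hne1 : ∀ i, 1 ≤ Ki i → D i (Ki i - 1) ≠ D i (Ki i))
    -- no tie `d_{i j_{K_i+1}^i} = d_{i j_{K_i+2}^i}` (paper indices):
    (hne2 : ∀ i, Ki i + 2 ≤ N → D i (Ki i) ≠ D i (Ki i + 1)) :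
    ∀ γ : Fin M → Fin N → ℝ,
      ((∀ i j, 0 ≤ γ i j) ∧ (∀ i, ∑ j, γ i j = 1 / (M : ℝ))) → γ ≠ γstar →
      L γstar < L γ := by
  rintro γ ⟨hγ0, hγsum⟩ hneq
  haveI : NeZero N := ⟨by omega⟩
  haveI : NeZero M := ⟨by omega⟩
  have hM0 : (0:ℝ) < M := by exact_mod_cast (by omega : 0 < M)
  have hN0 : 0 < N := by omega
  have h1α : (0:ℝ) < 1 - α := by linarith
  have hαC : 0 ≤ α / C := div_nonneg hα0 hC.le
  have h1αM : (0:ℝ) < (1 - α) * M := mul_pos h1α hM0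
  have hsbar_pos : (0:ℝ) < sbar := by
    rw [hsbar]
    exact Finset.sum_pos (fun j _ => one_div_pos.mpr (hρ j)) Finset.univ_nonempty
  -- positivity of R
  have hRpos : ∀ i (l : ℕ), l < N → 0 < R i l := by
    intro i l hl
    have := hR i ⟨l, hl⟩
    simp only [Fin.val_mk] at this
    rw [this]
    exact one_div_pos.mpr (hρ _)
  -- monotonicity of S
  have hSsucc : ∀ i (k : ℕ), k < N → S i (k+1) = S i k + R i k := by
    intro i k hk
    rw [hS i (k+1) (by omega), hS i k (by omega), Finset.sum_range_succ]
  have hSmono : ∀ i (a b : ℕ), a ≤ b → b ≤ N → S i a ≤ S i b := by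
    intro i a b hab hb
    rw [hS i a (by omega), hS i b hb]
    apply Finset.sum_le_sum_of_subset_of_nonneg (Finset.range_subset_range.2 hab)
    intro l hl _
    simp only [Finset.mem_range] at hl
    exact (hRpos i l (by omega)).le
  have hSstrict : ∀ i (a b : ℕ), a < b → b ≤ N → S i a < S i b := by
    intro i a b hab hb
    have h1 : S i (a+1) = S i a + R i a := hSsucc i a (by omega)
    have h2 : S i (a+1) ≤ S i b := hSmono i (a+1) b (by omega) hb
    have := hRpos i a (by omega)
    linarith
  have hS0 : ∀ i, S i 0 = 0 := fun i => by rw [hS i 0 (by omega)]; simp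
  have hSN : ∀ i, S i N = sbar := by
    intro i
    rw [hS i N le_rfl, ← Fin.sum_univ_eq_sum_range (fun l => R i l) N, hsbar]
    rw [← Equiv.sum_comp (σ i) (fun j => 1 / ρ j)]
    exact Finset.sum_congr rfl fun l _ => hR i l
  have hstar_lt : sstar < sbar := by linarith
  -- sstar > 0
  have hstar_pos : (0:ℝ) < sstar := by
    obtain ⟨imin, _, hmin⟩ := Finset.exists_min_image Finset.univ (fun i => S i 1)
      Finset.univ_nonempty
    have hmem : S imin 1 ∈ Scal := by
      rw [hScal]; exact Set.mem_insert_iff.2 (Or.inr ⟨imin, 1, le_rfl, hN, rfl⟩)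
    have hc1 : c (S imin 1) = 0 := by
      rw [hc]
      apply Finset.sum_eq_zero
      intro i _
      exact hci0 i _ (hmin i (Finset.mem_univ i))
    have hle : S imin 1 ≤ sstar := by
      apply hsstar3 _ hmem
      rw [hc1, mul_zero]
      exact h1αM
    have : 0 < S imin 1 := by
      rw [hS imin 1 hN, Finset.sum_range_one]
      exact hRpos imin 0 hN0
    linarith
  have hstar_ne : sstar ≠ 0 := ne_of_gt hstar_pos
  have hM0' : (M:ℝ) ≠ 0 := ne_of_gt hM0
  have hKlt : ∀ i, Ki i < N := fun i => by have := hKi1 i; omega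
  have hSK1 : ∀ i, sstar < S i (Ki i + 1) := by
    intro i
    by_contra h
    push_neg at h
    by_cases hc1 : Ki i + 1 ≤ N - 1
    · have := hKi3 i (Ki i + 1) hc1 h
      omega
    · have hKN : Ki i + 1 = N := by have := hKi1 i; omega
      rw [hKN, hSN i] at h
      linarith
  -- the level index mi
  set mi : Fin M → ℕ := fun i => if S i (Ki i) = sstar then Ki i - 1 else Ki i with hmi_def
  have hKpos_of_eq : ∀ i, S i (Ki i) = sstar → 1 ≤ Ki i := by
    intro i he
    by_contra h
    have h0 : Ki i = 0 := by omega
    rw [h0, hS0 i] at he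
    linarith
  have hmi_le : ∀ i, mi i ≤ Ki i := by
    intro i; simp only [hmi_def]; split <;> omega
  have hmi_lt : ∀ i, mi i < N := fun i => lt_of_le_of_lt (hmi_le i) (hKlt i)
  have hmi_low : ∀ i, S i (mi i) < sstar := by
    intro i
    simp only [hmi_def]
    split
    · rename_i he
      have h1 := hKpos_of_eq i he
      calc S i (Ki i - 1) < S i (Ki i) := hSstrict i _ _ (by omega) (hKlt i).le
        _ = sstar := he
    · rename_i he
      exact lt_of_le_of_ne (hKi2 i) he
  have hmi_high : ∀ i, sstar ≤ S i (mi i + 1) := by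
    intro i
    simp only [hmi_def]
    split
    · rename_i he
      have h1 := hKpos_of_eq i he
      have : Ki i - 1 + 1 = Ki i := by omega
      rw [this, he]
    · exact (hSK1 i).le
  -- βs and cap value
  set βs : ℝ := 1 / ((M:ℝ) * sstar) with hβs_def
  have hβs_pos : 0 < βs := by rw [hβs_def]; positivity
  have hβss : βs * sstar = 1 / M := by rw [hβs_def]; field_simp
  -- γstar values
  have hgval_lt : ∀ i (l : Fin N), (l:ℕ) < Ki i → γstar i (σ i l) = βs * R i (l:ℕ) := by
    intro i l hl
    rw [hγstar i l, if_pos hl, hR i l, hβs_def]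
    have := (hρ (σ i l)).ne'
    field_simp
  have hgval_eq : ∀ i (l : Fin N), (l:ℕ) = Ki i →
      γstar i (σ i l) = 1 / M - βs * S i (Ki i) := by
    intro i l hl
    have hsum : ∑ x ∈ Finset.range (Ki i), R i x / ((M:ℝ) * sstar) = βs * S i (Ki i) := by
      rw [hS i (Ki i) (hKlt i).le, Finset.mul_sum]
      exact Finset.sum_congr rfl fun x _ => by rw [hβs_def]; ring
    rw [hγstar i l, if_neg (by omega), if_pos hl, hsum]
  have hgval_gt : ∀ i (l : Fin N), Ki i < (l:ℕ) → γstar i (σ i l) = 0 := by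
    intro i l hl
    rw [hγstar i l, if_neg (by omega), if_neg (by omega)]
  have hg0' : ∀ i (l : Fin N), 0 ≤ γstar i (σ i l) := by
    intro i l
    rcases lt_trichotomy (l:ℕ) (Ki i) with h | h | h
    · rw [hgval_lt i l h]
      exact mul_nonneg hβs_pos.le (hRpos i l (l.2)).le
    · rw [hgval_eq i l h]
      have h2 : βs * S i (Ki i) ≤ βs * sstar := by
        apply mul_le_mul_of_nonneg_left (hKi2 i) hβs_pos.le
      rw [hβss] at h2
      linarith
    · rw [hgval_gt i l h]
  have hgcap : ∀ i (l : Fin N), γstar i (σ i l) ≤ βs * R i (l:ℕ) := by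
    intro i l
    rcases lt_trichotomy (l:ℕ) (Ki i) with h | h | h
    · rw [hgval_lt i l h]
    · rw [hgval_eq i l h, h]
      have h1 : sstar ≤ S i (Ki i + 1) := (hSK1 i).le
      have h2 : S i (Ki i + 1) = S i (Ki i) + R i (Ki i) := hSsucc i _ (hKlt i)
      have h3 : βs * sstar ≤ βs * (S i (Ki i) + R i (Ki i)) := by
        apply mul_le_mul_of_nonneg_left (by linarith) hβs_pos.le
      rw [hβss, mul_add] at h3
      linarith
    · rw [hgval_gt i l h]
      exact mul_nonneg hβs_pos.le (hRpos i l (l.2)).le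
  -- zero above mi
  have hgz' : ∀ i (l : Fin N), mi i < (l:ℕ) → γstar i (σ i l) = 0 := by
    intro i l hl
    rcases lt_trichotomy (l:ℕ) (Ki i) with h | h | h
    · exfalso
      have := hmi_le i
      have hne : mi i ≠ Ki i - 1 ∨ True := Or.inr trivial
      simp only [hmi_def] at hl
      split at hl
      · rename_i he
        have h1 := hKpos_of_eq i he
        omega
      · omega
    · simp only [hmi_def] at hl
      split at hl
      · rename_i he
        rw [hgval_eq i l h, he, hβss]
        ring
      · omega
    · exact hgval_gt i l h
  -- row sums of γstar
  have hgsum : ∀ i, ∑ l : Fin N, γstar i (σ i l) = 1 / M := by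
    intro i
    have hsplit : ∀ l : Fin N, γstar i (σ i l) =
        (if (l:ℕ) < Ki i then βs * R i (l:ℕ) else 0)
        + (if (l:ℕ) = Ki i then 1 / (M:ℝ) - βs * S i (Ki i) else 0) := by
      intro l
      rcases lt_trichotomy (l:ℕ) (Ki i) with h | h | h
      · rw [hgval_lt i l h, if_pos h, if_neg (by omega)]; ring
      · rw [hgval_eq i l h, if_neg (by omega), if_pos h]; ring
      · rw [hgval_gt i l h, if_neg (by omega), if_neg (by omega)]; ring
    rw [Finset.sum_congr rfl fun l _ => hsplit l, Finset.sum_add_distrib]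
    have h1 : ∑ l : Fin N, (if (l:ℕ) < Ki i then βs * R i (l:ℕ) else 0)
        = βs * S i (Ki i) := by
      rw [← aux_range_fin (hKlt i).le (fun l => βs * R i l), hS i (Ki i) (hKlt i).le,
        Finset.mul_sum]
    have h2 : ∑ l : Fin N, (if (l:ℕ) = Ki i then 1 / (M:ℝ) - βs * S i (Ki i) else 0)
        = 1 / (M:ℝ) - βs * S i (Ki i) := by
      rw [Finset.sum_eq_single (⟨Ki i, hKlt i⟩ : Fin N)]
      · rw [if_pos rfl]
      · intro b _ hb
        rw [if_neg (by simpa [Fin.ext_iff] using hb)]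
      · intro h; exact absurd (Finset.mem_univ _) h
    rw [h1, h2]
    ring
  -- D monotone
  have hDmono : ∀ i (a b : Fin N), (a:ℕ) ≤ (b:ℕ) → D i (a:ℕ) ≤ D i (b:ℕ) := by
    intro i a b hab
    rw [hD i a, hD i b]
    exact hsort i (show a ≤ b from hab)
  -- L expansions, sup bounds
  have hLγ := hL γ
  have hLγs := hL γstar
  set t : ℝ := ⨆ i, ⨆ j, ρ j * |γ i j - 1 / ρ j / ((M:ℝ) * sbar)| with ht_def
  set t' : ℝ := ⨆ i, ⨆ j, ρ j * |γstar i j - 1 / ρ j / ((M:ℝ) * sbar)| with ht'_def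
  set β : ℝ := 1 / ((M:ℝ) * sbar) + t with hβ_def
  have hsbar_ne : sbar ≠ 0 := ne_of_gt hsbar_pos
  have h1s : 1 / ((M:ℝ)*sbar) ≤ βs - 1 / ((M:ℝ)*sbar) := by
    have key : 2 * sstar ≤ sbar := by linarith
    have h2 : 1 / ((M:ℝ)*sbar) ≤ 1/((M:ℝ)*(2*sstar)) := by
      apply one_div_le_one_div_of_le (by positivity)
      apply mul_le_mul_of_nonneg_left key hM0.le
    have e : 1/((M:ℝ)*(2*sstar)) = βs/2 := by
      rw [hβs_def]
      field_simp
    rw [e] at h2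
    linarith
  have htt' : t' ≤ βs - 1 / ((M:ℝ) * sbar) := by
    rw [ht'_def]
    apply ciSup_le
    intro i
    apply ciSup_le
    intro j
    obtain ⟨l, hl⟩ : ∃ l, σ i l = j := ⟨(σ i).symm j, (σ i).apply_symm_apply j⟩
    subst hl
    have h0 := hg0' i l
    have hcapl := hgcap i l
    have hRval := hR i l
    have hp : 0 < ρ (σ i l) := hρ _
    have hup : ρ (σ i l) * (1 / ρ (σ i l) / ((M:ℝ)*sbar)) = 1 / ((M:ℝ)*sbar) := by
      field_simp
    have hcap2 : ρ (σ i l) * γstar i (σ i l) ≤ βs := by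
      have h5 : γstar i (σ i l) ≤ βs * (1 / ρ (σ i l)) := by rw [← hRval]; exact hcapl
      calc ρ (σ i l) * γstar i (σ i l) ≤ ρ (σ i l) * (βs * (1 / ρ (σ i l))) :=
            mul_le_mul_of_nonneg_left h5 hp.le
        _ = βs := by field_simp
    have habs : ρ (σ i l) * |γstar i (σ i l) - 1 / ρ (σ i l) / ((M:ℝ) * sbar)|
        = |ρ (σ i l) * γstar i (σ i l) - ρ (σ i l) * (1 / ρ (σ i l) / ((M:ℝ)*sbar))| := by
      rw [← mul_sub, abs_mul, abs_of_pos hp]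
    rw [habs, hup]
    rw [abs_le]
    constructor
    · have : 0 ≤ ρ (σ i l) * γstar i (σ i l) := mul_nonneg hp.le h0
      linarith
    · linarith
  -- cap on γ
  have hbdd1 : ∀ i, BddAbove (Set.range fun j => ρ j * |γ i j - 1 / ρ j / ((M:ℝ)*sbar)|) :=
    fun i => Set.Finite.bddAbove (Set.finite_range _)
  have hbdd2 : BddAbove (Set.range fun i => ⨆ j, ρ j * |γ i j - 1 / ρ j / ((M:ℝ)*sbar)|) :=
    Set.Finite.bddAbove (Set.finite_range _)
  have hTge : ∀ i j, ρ j * (γ i j - 1 / ρ j / ((M:ℝ)*sbar)) ≤ t := by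
    intro i j
    have h1 : ρ j * (γ i j - 1 / ρ j / ((M:ℝ)*sbar)) ≤ ρ j * |γ i j - 1 / ρ j / ((M:ℝ)*sbar)| :=
      mul_le_mul_of_nonneg_left (le_abs_self _) (hρ j).le
    have h2 : ρ j * |γ i j - 1 / ρ j / ((M:ℝ)*sbar)| ≤ ⨆ j, ρ j * |γ i j - 1 / ρ j / ((M:ℝ)*sbar)| :=
      le_ciSup (hbdd1 i) j
    have h3 : (⨆ j, ρ j * |γ i j - 1 / ρ j / ((M:ℝ)*sbar)|) ≤ t := by
      rw [ht_def]; exact le_ciSup hbdd2 i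
    linarith
  have hcap : ∀ i (l : Fin N), γ i (σ i l) ≤ β * R i (l:ℕ) := by
    intro i l
    have h1 := hTge i (σ i l)
    have hp : 0 < ρ (σ i l) := hρ _
    have hup : ρ (σ i l) * (1 / ρ (σ i l) / ((M:ℝ)*sbar)) = 1 / ((M:ℝ)*sbar) := by
      field_simp
    rw [hR i l, mul_one_div, le_div_iff₀ hp]
    have hexp : ρ (σ i l) * (γ i (σ i l) - 1 / ρ (σ i l) / ((M:ℝ)*sbar))
        = ρ (σ i l) * γ i (σ i l) - ρ (σ i l) * (1 / ρ (σ i l) / ((M:ℝ)*sbar)) := by ring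
    rw [hexp, hup] at h1
    rw [hβ_def]
    linarith [mul_comm (γ i (σ i l)) (ρ (σ i l))]
  -- cost conversions
  have hcost : ∀ (δ : Fin M → Fin N → ℝ) (i : Fin M),
      ∑ j, δ i j * d i j = ∑ l : Fin N, δ i (σ i l) * D i (l:ℕ) := by
    intro δ i
    rw [← Equiv.sum_comp (σ i) (fun j => δ i j * d i j)]
    exact Finset.sum_congr rfl fun l _ => by rw [hD i l]
  have hfsum : ∀ i, ∑ l : Fin N, γ i (σ i l) = ∑ l : Fin N, γstar i (σ i l) := by
    intro i
    rw [hgsum i, Equiv.sum_comp (σ i) (γ i)]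
    exact hγsum i
  -- evaluating c at sstar
  have hcstar : c sstar = ∑ i, ∑ l ∈ Finset.range (mi i), (D i (mi i) - D i l) * R i l := by
    rw [hc]
    apply Finset.sum_congr rfl
    intro i _
    by_cases h0 : mi i = 0
    · rw [h0]
      simp only [Finset.range_zero, Finset.sum_empty]
      apply hci0
      have := hmi_high i
      rw [h0] at this
      simpa using this
    · have h2 := hci i sstar (mi i + 1) (by omega) (by have := hmi_lt i; omega)
        (by simpa using hmi_low i) (hmi_high i)
      simpa using h2
  -- evaluating c at s0
  obtain ⟨s0, hs0mem, hs0gt, hcs0⟩ : ∃ s0, s0 ∈ Scal ∧ sstar < s0 ∧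
      c s0 = ∑ i, ∑ l ∈ Finset.range (Ki i), (D i (Ki i) - D i l) * R i l := by
    obtain ⟨i2, _, hmin⟩ := Finset.exists_min_image Finset.univ (fun i => S i (Ki i + 1))
      Finset.univ_nonempty
    refine ⟨S i2 (Ki i2 + 1), ?_, hSK1 i2, ?_⟩
    · rw [hScal]
      exact Set.mem_insert_iff.2 (Or.inr ⟨i2, Ki i2 + 1, by omega, by have := hKlt i2; omega, rfl⟩)
    · rw [hc]
      apply Finset.sum_congr rfl
      intro i _
      have hlow : S i (Ki i) < S i2 (Ki i2 + 1) := lt_of_le_of_lt (hKi2 i) (hSK1 i2)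
      have hhigh : S i2 (Ki i2 + 1) ≤ S i (Ki i + 1) := hmin i (Finset.mem_univ i)
      by_cases h0 : Ki i = 0
      · rw [h0]
        simp only [Finset.range_zero, Finset.sum_empty]
        apply hci0
        rw [h0] at hhigh
        simpa using hhigh
      · have h2 := hci i _ (Ki i + 1) (by omega) (by have := hKlt i; omega)
          (by simpa using hlow) hhigh
        simpa using h2
  have hcs0_big : (1 - α) * (M:ℝ) < (α / C) * c s0 := by
    have hns : ¬ ((α / C) * c s0 < (1 - α) * (M:ℝ)) := fun hlt =>
      absurd (hsstar3 s0 hs0mem hlt) (not_le.mpr hs0gt)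
    exact lt_of_le_of_ne (not_lt.mp hns) (Ne.symm (hnoeq s0 hs0mem))
  have hα_pos : 0 < α := by
    rcases lt_or_eq_of_le hα0 with h | h
    · exact h
    · exfalso
      rw [← h] at hcs0_big
      norm_num at hcs0_big
      linarith
  have hαC' : 0 < α / C := div_pos hα_pos hC
  -- per row difference bound
  have hdiffrow : ∀ (i : Fin M) (m : ℕ), m < N →
      (∀ l : Fin N, (l:ℕ) < m → γstar i (σ i l) = βs * R i (l:ℕ)) →
      (∀ l : Fin N, m < (l:ℕ) → γstar i (σ i l) = 0) →
      (β - βs) * ∑ l ∈ Finset.range m, (D i l - D i m) * R i l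
        ≤ ∑ l : Fin N, (γ i (σ i l) - γstar i (σ i l)) * D i (l:ℕ) :=
    fun i m hm hg hgz => aux_row _ _ _ _ m hm β βs (hfsum i) (hcap i)
      (fun l => hγ0 i _) hg hgz (hDmono i)
  have hcostdiff : (∑ i, ∑ j, γ i j * d i j) - (∑ i, ∑ j, γstar i j * d i j)
      = ∑ i, ∑ l : Fin N, (γ i (σ i l) - γstar i (σ i l)) * D i (l:ℕ) := by
    rw [← Finset.sum_sub_distrib]
    apply Finset.sum_congr rfl
    intro i _
    rw [hcost γ i, hcost γstar i, ← Finset.sum_sub_distrib]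
    exact Finset.sum_congr rfl fun l _ => by ring
  have hnegsum : ∀ (i : Fin M) (m : ℕ),
      ∑ l ∈ Finset.range m, (D i l - D i m) * R i l
        = -∑ l ∈ Finset.range m, (D i m - D i l) * R i l := by
    intro i m
    rw [← Finset.sum_neg_distrib]
    exact Finset.sum_congr rfl fun x _ => by ring
  rw [hLγ, hLγs]
  set A := ∑ i, ∑ j, γ i j * d i j with hA_def
  set B := ∑ i, ∑ j, γstar i j * d i j with hB_def
  clear_value A B t t' β βs
  have e2 : β - βs ≤ t - t' := by
    rw [hβ_def]
    linarith
  have e4 : (1-α) * ((M:ℝ) * (β - βs)) ≤ (1-α) * ((M:ℝ) * (t - t')) := by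
    apply mul_le_mul_of_nonneg_left _ h1α.le
    exact mul_le_mul_of_nonneg_left e2 hM0.le
  rcases lt_trichotomy β βs with hβlt | hβeq | hβgt
  · -- cap level strictly above sstar level: use pivot at Ki
    have hrows : (β - βs) * (∑ i, ∑ l ∈ Finset.range (Ki i), (D i l - D i (Ki i)) * R i l)
        ≤ ∑ i, ∑ l : Fin N, (γ i (σ i l) - γstar i (σ i l)) * D i (l:ℕ) := by
      rw [Finset.mul_sum]
      apply Finset.sum_le_sum
      intro i _
      exact hdiffrow i (Ki i) (hKlt i) (hgval_lt i) (hgval_gt i)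
    have hEe : ∑ i, ∑ l ∈ Finset.range (Ki i), (D i l - D i (Ki i)) * R i l = - c s0 := by
      rw [hcs0, ← Finset.sum_neg_distrib]
      exact Finset.sum_congr rfl fun i _ => hnegsum i (Ki i)
    rw [hEe] at hrows
    have hcd : (β - βs) * (- c s0) ≤ A - B := by
      rw [hcostdiff]; exact hrows
    have e1 : (α/C) * ((β - βs) * (- c s0)) ≤
        (α/C) * (A - B) :=
      mul_le_mul_of_nonneg_left hcd hαC
    have e3 : 0 < (βs - β) * ((α/C) * c s0 - (1-α)*(M:ℝ)) :=
      mul_pos (by linarith) (by linarith)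
    linarith only [e1, e3, e4]
  · -- equal levels: strict comparison of transport costs
    have hex : ∃ (i : Fin M) (l : Fin N),
        γ i (σ i l) ≠ γstar i (σ i l) ∧ (l:ℕ) ≠ Ki i := by
      have h1 : ∃ i j, γ i j ≠ γstar i j := by
        by_contra h
        push_neg at h
        exact hneq (funext fun i => funext fun j => h i j)
      obtain ⟨i, j, hij⟩ := h1
      obtain ⟨l, hjl⟩ : ∃ l, σ i l = j := ⟨(σ i).symm j, (σ i).apply_symm_apply j⟩
      by_cases hK : (l:ℕ) = Ki i
      · by_contra hcon
        push_neg at hcon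
        have hall : ∀ l' : Fin N, l' ≠ l → γ i (σ i l') = γstar i (σ i l') := by
          intro l' hne'
          by_contra hne''
          exact hne' (Fin.ext (by rw [hcon i l' hne'', hK]))
        have hsum2 := hfsum i
        rw [← Finset.add_sum_erase _ _ (Finset.mem_univ l),
          ← Finset.add_sum_erase _ (fun l' => γstar i (σ i l')) (Finset.mem_univ l)] at hsum2
        have heq2 : ∑ l' ∈ Finset.univ.erase l, γ i (σ i l')
            = ∑ l' ∈ Finset.univ.erase l, γstar i (σ i l') :=
          Finset.sum_congr rfl fun x hx => hall x (Finset.mem_erase.1 hx).1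
        have : γ i (σ i l) = γstar i (σ i l) := by linarith
        rw [hjl] at this
        exact hij this
      · exact ⟨i, l, by rw [hjl]; exact hij, hK⟩
    obtain ⟨i0, l0, hne0, hKne0⟩ := hex
    have hterm : ∀ (i : Fin M) (l : Fin N),
        0 ≤ (γ i (σ i l) - γstar i (σ i l)) * (D i (l:ℕ) - D i (Ki i)) := by
      intro i l
      rcases lt_trichotomy (l:ℕ) (Ki i) with h | h | h
      · have h1 := hcap i l
        rw [hβeq] at h1
        have h2 : γ i (σ i l) - γstar i (σ i l) ≤ 0 := by
          rw [hgval_lt i l h]; linarith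
        have h3 : D i (l:ℕ) - D i (Ki i) ≤ 0 := by
          have := hDmono i l ⟨Ki i, hKlt i⟩ (by simpa using h.le)
          simp only [Fin.val_mk] at this
          linarith
        nlinarith
      · have hz : D i (l:ℕ) - D i (Ki i) = 0 := by rw [h]; ring
        rw [hz, mul_zero]
      · apply mul_nonneg
        · rw [hgval_gt i l h]
          simpa using hγ0 i (σ i l)
        · have := hDmono i ⟨Ki i, hKlt i⟩ l (by simpa using h.le)
          simp only [Fin.val_mk] at this
          linarith
    have hstrict : 0 < (γ i0 (σ i0 l0) - γstar i0 (σ i0 l0)) * (D i0 (l0:ℕ) - D i0 (Ki i0)) := by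
      rcases lt_or_gt_of_ne hKne0 with h | h
      · have h1 := hcap i0 l0
        rw [hβeq] at h1
        have h2 : γ i0 (σ i0 l0) - γstar i0 (σ i0 l0) < 0 := by
          have hle : γ i0 (σ i0 l0) ≤ γstar i0 (σ i0 l0) := by
            rw [hgval_lt i0 l0 h]; linarith
          exact sub_neg.mpr (lt_of_le_of_ne hle hne0)
        have hK1 : 1 ≤ Ki i0 := by omega
        have hKN := hKlt i0
        have ha : D i0 (l0:ℕ) ≤ D i0 (Ki i0 - 1) := by
          have := hDmono i0 l0 ⟨Ki i0 - 1, by omega⟩ (by simp; omega)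
          simpa using this
        have hb : D i0 (Ki i0 - 1) < D i0 (Ki i0) := by
          apply lt_of_le_of_ne _ (hne1 i0 hK1)
          have := hDmono i0 ⟨Ki i0 - 1, by omega⟩ ⟨Ki i0, hKlt i0⟩ (by simp)
          simpa using this
        have h3 : D i0 (l0:ℕ) - D i0 (Ki i0) < 0 := by linarith
        exact mul_pos_of_neg_of_neg h2 h3
      · have h2 : 0 < γ i0 (σ i0 l0) - γstar i0 (σ i0 l0) := by
          rw [hgval_gt i0 l0 h] at hne0 ⊢
          have := hγ0 i0 (σ i0 l0)
          have := lt_of_le_of_ne this (Ne.symm (by simpa using hne0))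
          linarith
      -- D strict above
        have h2N : Ki i0 + 2 ≤ N := by have := l0.2; omega
        have ha : D i0 (Ki i0) < D i0 (Ki i0 + 1) := by
          apply lt_of_le_of_ne _ (hne2 i0 h2N)
          have := hDmono i0 ⟨Ki i0, hKlt i0⟩ ⟨Ki i0 + 1, by omega⟩ (by simp)
          simpa using this
        have hb : D i0 (Ki i0 + 1) ≤ D i0 (l0:ℕ) := by
          have := hDmono i0 ⟨Ki i0 + 1, by omega⟩ l0 (by simp; omega)
          simpa using this
        have h3 : 0 < D i0 (l0:ℕ) - D i0 (Ki i0) := by linarith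
        exact mul_pos h2 h3
    have hpos : 0 < ∑ i, ∑ l : Fin N, (γ i (σ i l) - γstar i (σ i l)) * (D i (l:ℕ) - D i (Ki i)) := by
      apply Finset.sum_pos' (fun i _ => Finset.sum_nonneg fun l _ => hterm i l)
      exact ⟨i0, Finset.mem_univ i0,
        Finset.sum_pos' (fun l _ => hterm i0 l) ⟨l0, Finset.mem_univ l0, hstrict⟩⟩
    have hcd : ∑ i, ∑ l : Fin N, (γ i (σ i l) - γstar i (σ i l)) * D i (l:ℕ)
        = ∑ i, ∑ l : Fin N, (γ i (σ i l) - γstar i (σ i l)) * (D i (l:ℕ) - D i (Ki i)) :=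
      Finset.sum_congr rfl fun i _ => aux_pivot _ _ (D i) (Ki i) (hfsum i)
    have e5 : 0 < (α/C) * (A - B) := by
      rw [hcostdiff, hcd]
      exact mul_pos hαC' hpos
    have e6 : 0 ≤ t - t' := by linarith only [e2, hβeq]
    have e7 : 0 ≤ (1-α) * ((M:ℝ) * (t - t')) :=
      mul_nonneg h1α.le (mul_nonneg hM0.le e6)
    linarith only [e5, e7]
  · -- cap level strictly below sstar level: use pivot at mi
    have hrows : (β - βs) * (∑ i, ∑ l ∈ Finset.range (mi i), (D i l - D i (mi i)) * R i l)
        ≤ ∑ i, ∑ l : Fin N, (γ i (σ i l) - γstar i (σ i l)) * D i (l:ℕ) := by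
      rw [Finset.mul_sum]
      apply Finset.sum_le_sum
      intro i _
      exact hdiffrow i (mi i) (hmi_lt i)
        (fun l hl => hgval_lt i l (lt_of_lt_of_le hl (hmi_le i))) (hgz' i)
    have hEe : ∑ i, ∑ l ∈ Finset.range (mi i), (D i l - D i (mi i)) * R i l = - c sstar := by
      rw [hcstar, ← Finset.sum_neg_distrib]
      exact Finset.sum_congr rfl fun i _ => hnegsum i (mi i)
    rw [hEe] at hrows
    have hcd : (β - βs) * (- c sstar) ≤
        A - B := by
      rw [hcostdiff]; exact hrows
    have e1 : (α/C) * ((β - βs) * (- c sstar)) ≤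
        (α/C) * (A - B) :=
      mul_le_mul_of_nonneg_left hcd hαC
    have e3 : 0 < (β - βs) * ((1-α)*(M:ℝ) - (α/C) * c sstar) :=
      mul_pos (by linarith) (by linarith)
    linarith only [e1, e3, e4]
end

section
/- The matrix γ* is feasible: every entry of γ* is nonnegative and each row of γ* sums to 1/M. In particular, for each i ∈ [M] one has Σ_{l=1}^{K_i} 1/(M·s*·ρ_{j_l^i}) = s_{K_i}^i/(M·s*) ≤ 1/M, so the entry γ*_{i j_{K_i+1}^i} is nonnegative. -/
open Finset

/-- The water-filling transport `γ*` of the KDE construction is feasible; in particular,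
for each `i`, `Σ_{l=1}^{K_i} 1/(M·s*·ρ_{j_l^i}) = s_{K_i}^i/(M·s*) ≤ 1/M`, so the entry
`γ*_{i j_{K_i+1}^i}` is nonnegative. -/
theorem stmt_6 (M N : ℕ) (hM : 1 ≤ M) (hN : 1 ≤ N)
    (d : Fin M → Fin N → ℝ) (hd : ∀ i j, 0 ≤ d i j)
    (C α : ℝ) (hC : 0 < C) (hα0 : 0 ≤ α) (hα1 : α < 1)
    (σ : Fin M → Equiv.Perm (Fin N))
    (hsort : ∀ i, Monotone fun k => d i (σ i k))
    (ρ : Fin N → ℝ) (hρ : ∀ j, 0 < ρ j)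
    (sbar : ℝ) (hsbar : sbar = ∑ j, 1 / ρ j)
    (D : Fin M → ℕ → ℝ) (hD : ∀ i (l : Fin N), D i (l : ℕ) = d i (σ i l))
    (R : Fin M → ℕ → ℝ) (hR : ∀ i (l : Fin N), R i (l : ℕ) = 1 / ρ (σ i l))
    (S : Fin M → ℕ → ℝ) (hS : ∀ i k, k ≤ N → S i k = ∑ l ∈ Finset.range k, R i l)
    (ci : Fin M → ℝ → ℝ)
    (hci0 : ∀ i (s : ℝ), s ≤ S i 1 → ci i s = 0)
    (hci : ∀ i (s : ℝ) (k : ℕ), 2 ≤ k → k ≤ N → S i (k - 1) < s → s ≤ S i k →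
      ci i s = ∑ l ∈ Finset.range (k - 1), (D i (k - 1) - D i l) * R i l)
    (c : ℝ → ℝ) (hc : ∀ s, c s = ∑ i, ci i s)
    (Scal : Set ℝ)
    (hScal : Scal = insert (0 : ℝ) {x : ℝ | ∃ i : Fin M, ∃ k, 1 ≤ k ∧ k ≤ N ∧ x = S i k})
    (sstar : ℝ) (hsstar1 : sstar ∈ Scal)
    (hsstar2 : (α / C) * c sstar < (1 - α) * (M : ℝ))
    (hsstar3 : ∀ s ∈ Scal, (α / C) * c s < (1 - α) * (M : ℝ) → s ≤ sstar)
    (Ki : Fin M → ℕ)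
    (hKi1 : ∀ i, Ki i ≤ N - 1)
    (hKi2 : ∀ i, S i (Ki i) ≤ sstar)
    (hKi3 : ∀ i k, k ≤ N - 1 → S i k ≤ sstar → k ≤ Ki i)
    (γstar : Fin M → Fin N → ℝ)
    (hγstar : ∀ i (k : Fin N), γstar i (σ i k) =
      if (k : ℕ) < Ki i then 1 / ((M : ℝ) * sstar * ρ (σ i k))
      else if (k : ℕ) = Ki i then
        1 / (M : ℝ) - ∑ l ∈ Finset.range (Ki i), R i l / ((M : ℝ) * sstar)
      else 0) :
    ((∀ i j, 0 ≤ γstar i j) ∧ (∀ i, ∑ j, γstar i j = 1 / (M : ℝ))) ∧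
      (∀ i, (∑ l ∈ Finset.range (Ki i), R i l / ((M : ℝ) * sstar))
          = S i (Ki i) / ((M : ℝ) * sstar)
        ∧ S i (Ki i) / ((M : ℝ) * sstar) ≤ 1 / (M : ℝ)) ∧
      ∀ i (k : Fin N), (k : ℕ) = Ki i → 0 ≤ γstar i (σ i k) := by
  have hMpos : (0:ℝ) < M := by exact_mod_cast hM
  have hN0 : 0 < N := hN
  have hRpos : ∀ i l, l < N → 0 < R i l := by
    intro i l hl
    show 0 < R i ((⟨l, hl⟩ : Fin N) : ℕ)
    rw [hR i ⟨l, hl⟩]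
    have := hρ (σ i ⟨l, hl⟩)
    positivity
  -- sstar is positive
  have : Nonempty (Fin M) := ⟨⟨0, hM⟩⟩
  obtain ⟨i₀, -, hmin⟩ := Finset.exists_min_image Finset.univ (fun i => S i 1)
    Finset.univ_nonempty
  have hc0 : c (S i₀ 1) = 0 := by
    rw [hc]
    exact Finset.sum_eq_zero fun i _ => hci0 i _ (hmin i (Finset.mem_univ i))
  have hmem : S i₀ 1 ∈ Scal := by
    rw [hScal]
    exact Set.mem_insert_iff.mpr (Or.inr ⟨i₀, 1, le_rfl, hN, rfl⟩)
  have hle : S i₀ 1 ≤ sstar := by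
    apply hsstar3 _ hmem
    rw [hc0, mul_zero]
    have h1α : (0:ℝ) < 1 - α := by linarith
    positivity
  have hS1pos : 0 < S i₀ 1 := by
    rw [hS i₀ 1 hN, Finset.sum_range_one]
    exact hRpos i₀ 0 hN0
  have hsspos : 0 < sstar := lt_of_lt_of_le hS1pos hle
  have hMs : (0:ℝ) < (M:ℝ) * sstar := mul_pos hMpos hsspos
  have hKiN : ∀ i, Ki i < N := fun i => lt_of_le_of_lt (hKi1 i) (Nat.sub_lt hN0 one_pos)
  have hSK : ∀ i, S i (Ki i) = ∑ l ∈ Finset.range (Ki i), R i l :=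
    fun i => hS i _ (le_of_lt (hKiN i))
  have hEq : ∀ i, (∑ l ∈ Finset.range (Ki i), R i l / ((M : ℝ) * sstar))
      = S i (Ki i) / ((M : ℝ) * sstar) := by
    intro i
    rw [hSK i, Finset.sum_div]
  have hIneq : ∀ i, S i (Ki i) / ((M : ℝ) * sstar) ≤ 1 / (M : ℝ) := by
    intro i
    have h1 : S i (Ki i) / ((M : ℝ) * sstar) ≤ sstar / ((M : ℝ) * sstar) := by
      gcongr
      exact hKi2 i
    have h2 : sstar / ((M : ℝ) * sstar) = 1 / (M : ℝ) := by
      field_simp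
    linarith
  have hnn : ∀ i j, 0 ≤ γstar i j := by
    intro i j
    have hj : j = σ i ((σ i).symm j) := ((σ i).apply_symm_apply j).symm
    rw [hj, hγstar]
    split_ifs with h1 h2
    · have := hρ (σ i ((σ i).symm j))
      positivity
    · rw [sub_nonneg, hEq i]
      exact hIneq i
    · exact le_refl _
  have hsum : ∀ i, ∑ j, γstar i j = 1 / (M : ℝ) := by
    intro i
    set F : ℕ → ℝ := fun n => if n < Ki i then R i n / ((M:ℝ) * sstar)
      else if n = Ki i then
        1 / (M : ℝ) - ∑ l ∈ Finset.range (Ki i), R i l / ((M : ℝ) * sstar)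
      else 0 with hF
    have h2 : ∀ k : Fin N, γstar i (σ i k) = F (k : ℕ) := by
      intro k
      rw [hγstar, hF]
      simp only
      split_ifs with hlt
      · rw [hR i k, div_div]
        congr 1
        ring
      · rfl
      · rfl
    have h1 : ∑ j, γstar i j = ∑ k : Fin N, F (k : ℕ) := by
      rw [← Fintype.sum_equiv (σ i) (fun k => γstar i (σ i k)) (γstar i) (fun k => rfl)]
      exact Finset.sum_congr rfl fun k _ => h2 k
    rw [h1, Fin.sum_univ_eq_sum_range F N]
    have hsub : Finset.range (Ki i + 1) ⊆ Finset.range N :=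
      Finset.range_subset_range.mpr (hKiN i)
    rw [← Finset.sum_subset hsub]
    · rw [Finset.sum_range_succ]
      have hmid : F (Ki i) = 1 / (M : ℝ)
          - ∑ l ∈ Finset.range (Ki i), R i l / ((M : ℝ) * sstar) := by
        rw [hF]; simp
      have hhead : ∑ n ∈ Finset.range (Ki i), F n
          = ∑ l ∈ Finset.range (Ki i), R i l / ((M : ℝ) * sstar) := by
        apply Finset.sum_congr rfl
        intro n hn
        rw [hF]
        simp only
        rw [if_pos (Finset.mem_range.mp hn)]
      rw [hmid, hhead]
      ring
    · intro n _ hn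
      have h3 : ¬ n < Ki i + 1 := fun h => hn (Finset.mem_range.mpr h)
      rw [hF]
      simp only
      rw [if_neg (by omega), if_neg (by omega)]
  exact ⟨⟨hnn, hsum⟩, fun i => ⟨hEq i, hIneq i⟩, fun i k _ => hnn i (σ i k)⟩
end

section
/- Assume 0 < α ≤ 1 and let the regularizer be G_TV; set θ = (1−α)·C/α. Let γ' ∈ ℝ^{M×N} be feasible, and define γ'' ∈ ℝ^{M×N} row-wise by: for 2 ≤ k ≤ N, γ''_{i j_k^i} = γ'_{i j_k^i} if d_{i j_k^i} − d_{i j_1^i} < θ and γ''_{i j_k^i} = 0 otherwise, and γ''_{i j_1^i} = 1/M − Σ_{k=2}^{N} γ''_{i j_k^i}. Then γ'' is feasible and L(γ'') ≤ L(γ'). -/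
open Finset

/-- First step of the proof of Theorem 3: truncating a feasible transport `γ'` beyond the
distance threshold `θ = (1-α)C/α` (moving the truncated mass to the nearest neighbor)
yields a feasible transport `γ''` with no larger `G_TV`-regularized objective. -/
theorem stmt_8 (M N : ℕ) (hM : 1 ≤ M) (hN : 1 ≤ N)
    (d : Fin M → Fin N → ℝ) (hd : ∀ i j, 0 ≤ d i j)
    (C α : ℝ) (hC : 0 < C) (hα0 : 0 < α) (hα1 : α ≤ 1)
    (σ : Fin M → Equiv.Perm (Fin N))
    (hsort : ∀ i, Monotone fun k => d i (σ i k))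
    (L : (Fin M → Fin N → ℝ) → ℝ)
    (hL : ∀ γ, L γ = (α / C) * (∑ i, ∑ j, γ i j * d i j)
      + (1 - α) * ((1 / 2) * ∑ i, ∑ j, |γ i j - 1 / ((M : ℝ) * N)|))
    -- `γ'` is feasible
    (γ' : Fin M → Fin N → ℝ)
    (hγ'1 : ∀ i j, 0 ≤ γ' i j) (hγ'2 : ∀ i, ∑ j, γ' i j = 1 / (M : ℝ))
    -- `γ''` keeps the entries of `γ'` within threshold and zeroes out the others,
    -- with the first entry of each row receiving the remaining mass
    (γ'' : Fin M → Fin N → ℝ)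
    (hγ''k : ∀ i (k : Fin N), (k : ℕ) ≠ 0 →
      γ'' i (σ i k) =
        if d i (σ i k) - d i (σ i ⟨0, by omega⟩) < (1 - α) * C / α then γ' i (σ i k)
        else 0)
    (hγ''0 : ∀ i, γ'' i (σ i ⟨0, by omega⟩) =
      1 / (M : ℝ) - ∑ k ∈ Finset.univ.filter (fun k : Fin N => (k : ℕ) ≠ 0), γ'' i (σ i k)) :
    ((∀ i j, 0 ≤ γ'' i j) ∧ (∀ i, ∑ j, γ'' i j = 1 / (M : ℝ))) ∧ L γ'' ≤ L γ' := by
  have hNpos : 0 < N := hN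
  set z : Fin N := ⟨0, hNpos⟩ with hzdef
  set θ : ℝ := (1 - α) * C / α with hθ
  have hθα : (α / C) * θ = 1 - α := by
    field_simp [hθ]
    rw [hθ]
    field_simp
  have h1α : 0 ≤ 1 - α := by linarith
  set F : Finset (Fin N) := Finset.univ.filter (fun k : Fin N => (k : ℕ) ≠ 0) with hF
  -- sandwich for nonzero indices
  have hle : ∀ i k, k ∈ F → 0 ≤ γ'' i (σ i k) ∧ γ'' i (σ i k) ≤ γ' i (σ i k) := by
    intro i k hk
    have hk' : (k : ℕ) ≠ 0 := by simpa [hF] using hk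
    rw [hγ''k i k hk']
    split
    · exact ⟨hγ'1 _ _, le_refl _⟩
    · exact ⟨le_refl _, hγ'1 _ _⟩
  -- splitting a sum over Fin N at z
  have hsplit : ∀ f : Fin N → ℝ, ∑ k, f k = f z + ∑ k ∈ F, f k := by
    intro f
    rw [← Finset.sum_filter_add_sum_filter_not Finset.univ (fun k : Fin N => (k : ℕ) ≠ 0) f]
    have h1 : Finset.univ.filter (fun k : Fin N => ¬ (k : ℕ) ≠ 0) = {z} := by
      ext k
      simp [Fin.ext_iff, hzdef]
    rw [h1, Finset.sum_singleton, ← hF]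
    ring
  have hz0 : γ'' = γ'' := rfl
  have hγ''z : ∀ i, γ'' i (σ i z) = 1 / (M : ℝ) - ∑ k ∈ F, γ'' i (σ i k) := by
    intro i; exact hγ''0 i
  have hγ'sum : ∀ i, ∑ k, γ' i (σ i k) = 1 / (M : ℝ) := by
    intro i
    rw [Equiv.sum_comp (σ i) (γ' i)]
    exact hγ'2 i
  have hγ'z : ∀ i, γ' i (σ i z) = 1 / (M : ℝ) - ∑ k ∈ F, γ' i (σ i k) := by
    intro i
    have := hγ'sum i
    rw [hsplit (fun k => γ' i (σ i k))] at this
    linarith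
  -- the truncated mass of row i
  set T : Fin M → ℝ := fun i => ∑ k ∈ F, (γ' i (σ i k) - γ'' i (σ i k)) with hT
  have hT0 : ∀ i, 0 ≤ T i := by
    intro i
    apply Finset.sum_nonneg
    intro k hk
    have := (hle i k hk).2
    linarith
  have hΔz : ∀ i, γ'' i (σ i z) - γ' i (σ i z) = T i := by
    intro i
    have hTi : T i = (∑ k ∈ F, γ' i ((σ i) k)) - ∑ k ∈ F, γ'' i ((σ i) k) := by
      simp only [hT, Finset.sum_sub_distrib]
    rw [hγ''z i, hγ'z i, hTi]
    ring
  -- row sums of γ''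
  have hsum'' : ∀ i, ∑ k, γ'' i (σ i k) = 1 / (M : ℝ) := by
    intro i
    rw [hsplit (fun k => γ'' i (σ i k)), hγ''z i]
    ring
  -- feasibility
  have hfeas1 : ∀ i j, 0 ≤ γ'' i j := by
    intro i j
    have hj : σ i ((σ i).symm j) = j := (σ i).apply_symm_apply j
    set k := (σ i).symm j with hkdef
    rw [← hj]
    by_cases hk : k ∈ F
    · exact (hle i k hk).1
    · have hk0 : k = z := by
        have : ¬ (k : ℕ) ≠ 0 := by simpa [hF] using hk
        simp only [not_not] at this
        exact Fin.ext this
      rw [hk0]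
      have := hΔz i
      have := hγ'1 i (σ i z)
      have := hT0 i
      linarith
  have hfeas2 : ∀ i, ∑ j, γ'' i j = 1 / (M : ℝ) := by
    intro i
    rw [← Equiv.sum_comp (σ i) (γ'' i)]
    exact hsum'' i
  refine ⟨⟨hfeas1, hfeas2⟩, ?_⟩
  -- cost inequality per row
  have hcost : ∀ i, ∑ j, γ'' i j * d i j ≤ ∑ j, γ' i j * d i j - θ * T i := by
    intro i
    rw [← Equiv.sum_comp (σ i) (fun j => γ'' i j * d i j),
        ← Equiv.sum_comp (σ i) (fun j => γ' i j * d i j)]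
    rw [hsplit (fun k => γ'' i (σ i k) * d i (σ i k)),
        hsplit (fun k => γ' i (σ i k) * d i (σ i k))]
    -- termwise bound on F
    have hterm : ∀ k ∈ F, (γ' i (σ i k) - γ'' i (σ i k)) * (d i (σ i z) + θ)
        ≤ (γ' i (σ i k) - γ'' i (σ i k)) * d i (σ i k) := by
      intro k hk
      have hk' : (k : ℕ) ≠ 0 := by simpa [hF] using hk
      rw [hγ''k i k hk']
      split_ifs with h
      · simp
      · simp only [sub_zero]
        have hd' : d i (σ i z) + θ ≤ d i (σ i k) := by
          push_neg at h
          have : d i (σ i ⟨0, hNpos⟩) = d i (σ i z) := rfl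
          linarith [h]
        exact mul_le_mul_of_nonneg_left hd' (hγ'1 i (σ i k))
    have hsumterm : T i * (d i (σ i z) + θ) ≤
        ∑ k ∈ F, (γ' i (σ i k) - γ'' i (σ i k)) * d i (σ i k) := by
      rw [hT, Finset.sum_mul]
      exact Finset.sum_le_sum hterm
    have hΔ := hΔz i
    have hFsub : ∑ k ∈ F, γ'' i (σ i k) * d i (σ i k)
        = ∑ k ∈ F, γ' i (σ i k) * d i (σ i k)
          - ∑ k ∈ F, (γ' i (σ i k) - γ'' i (σ i k)) * d i (σ i k) := by
      rw [← Finset.sum_sub_distrib]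
      congr 1
      ext k
      ring
    rw [hFsub]
    have e1 : γ'' i ((σ i) z) * d i ((σ i) z)
        = γ' i ((σ i) z) * d i ((σ i) z) + T i * d i ((σ i) z) := by
      rw [show γ'' i ((σ i) z) = γ' i ((σ i) z) + T i from by linarith [hΔz i]]
      ring
    have e2 : T i * (d i ((σ i) z) + θ) = T i * d i ((σ i) z) + θ * T i := by ring
    linarith [hsumterm, e1, e2]
  -- TV inequality per row
  have htv : ∀ i, ∑ j, |γ'' i j - 1 / ((M : ℝ) * N)|
      ≤ (∑ j, |γ' i j - 1 / ((M : ℝ) * N)|) + 2 * T i := by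
    intro i
    have hptw : ∑ j, |γ'' i j - 1 / ((M : ℝ) * N)|
        ≤ ∑ j, (|γ' i j - 1 / ((M : ℝ) * N)| + |γ'' i j - γ' i j|) := by
      apply Finset.sum_le_sum
      intro j _
      have : γ'' i j - 1 / ((M : ℝ) * N)
          = (γ' i j - 1 / ((M : ℝ) * N)) + (γ'' i j - γ' i j) := by ring
      rw [this]
      exact abs_add_le _ _
    rw [Finset.sum_add_distrib] at hptw
    have habs : ∑ j, |γ'' i j - γ' i j| = 2 * T i := by
      rw [← Equiv.sum_comp (σ i) (fun j => |γ'' i j - γ' i j|)]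
      rw [hsplit (fun k => |γ'' i (σ i k) - γ' i (σ i k)|)]
      have h1 : |γ'' i (σ i z) - γ' i (σ i z)| = T i := by
        rw [hΔz i]
        exact abs_of_nonneg (hT0 i)
      have h2 : ∑ k ∈ F, |γ'' i (σ i k) - γ' i (σ i k)|
          = ∑ k ∈ F, (γ' i (σ i k) - γ'' i (σ i k)) := by
        apply Finset.sum_congr rfl
        intro k hk
        have := (hle i k hk).2
        rw [abs_of_nonpos (by linarith)]
        ring
      rw [h1, h2, show (∑ k ∈ F, (γ' i ((σ i) k) - γ'' i ((σ i) k))) = T i from rfl]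
      ring
    rw [habs] at hptw
    exact hptw
  -- assemble
  rw [hL γ'', hL γ']
  have hcostsum : ∑ i, ∑ j, γ'' i j * d i j
      ≤ (∑ i, ∑ j, γ' i j * d i j) - θ * ∑ i, T i := by
    rw [Finset.mul_sum, ← Finset.sum_sub_distrib]
    exact Finset.sum_le_sum (fun i _ => hcost i)
  have htvsum : ∑ i, ∑ j, |γ'' i j - 1 / ((M : ℝ) * N)|
      ≤ (∑ i, ∑ j, |γ' i j - 1 / ((M : ℝ) * N)|) + 2 * ∑ i, T i := by
    rw [Finset.mul_sum, ← Finset.sum_add_distrib]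
    exact Finset.sum_le_sum (fun i _ => htv i)
  have hαC : 0 < α / C := div_pos hα0 hC
  set ST := ∑ i, T i
  set A'' := ∑ i, ∑ j, γ'' i j * d i j
  set A' := ∑ i, ∑ j, γ' i j * d i j
  set B'' := ∑ i, ∑ j, |γ'' i j - 1 / ((M : ℝ) * N)|
  set B' := ∑ i, ∑ j, |γ' i j - 1 / ((M : ℝ) * N)|
  have h1 : (α / C) * A'' ≤ (α / C) * A' - (α / C) * (θ * ST) := by
    nlinarith [hcostsum, hαC]
  have h2 : (1 - α) * ((1/2) * B'') ≤ (1 - α) * ((1/2) * B') + (1 - α) * ST := by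
    nlinarith [htvsum, h1α]
  have h3 : (α / C) * (θ * ST) = (1 - α) * ST := by
    rw [← mul_assoc, hθα]
  linarith
end

section
/- Let the regularizer be G_KDE and assume s* ≤ s̄/2. Let γ' ∈ ℝ^{M×N} be feasible and suppose ρ_{j_k^i}·γ'_{i j_k^i} ≤ 1/(M·s*) for every i ∈ [M] and every k ∈ [K_i]. Then L(γ*) ≤ L(γ'). -/
open Finset

lemma sum_ite_lt_range (N K : ℕ) (hK : K ≤ N) (f : ℕ → ℝ) :
    ∑ l ∈ Finset.range N, (if l < K then f l else 0) = ∑ l ∈ Finset.range K, f l := by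
  rw [Finset.sum_ite, Finset.sum_const_zero, add_zero]
  congr 1
  ext l
  simp only [Finset.mem_filter, Finset.mem_range]
  omega

lemma row_bound (N K : ℕ) (hKN : K < N) (dd δ bnd : Fin N → ℝ)
    (hmono : Monotone dd) (hsum : ∑ k, δ k = 0)
    (h1 : ∀ k : Fin N, (k : ℕ) < K → δ k ≤ - bnd k)
    (h2 : ∀ k : Fin N, K < (k : ℕ) → 0 ≤ δ k) :
    ∑ k : Fin N, (if (k : ℕ) < K then bnd k * (dd ⟨K, hKN⟩ - dd k) else 0)
      ≤ ∑ k, δ k * dd k := by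
  have key : ∑ k, δ k * dd k = ∑ k, δ k * (dd k - dd ⟨K, hKN⟩) := by
    rw [Finset.sum_congr rfl (fun k _ => by ring : ∀ k ∈ univ, δ k * dd k = δ k * (dd k - dd ⟨K, hKN⟩) + δ k * dd ⟨K, hKN⟩)]
    rw [Finset.sum_add_distrib, ← Finset.sum_mul, hsum]
    ring
  rw [key]
  apply Finset.sum_le_sum
  intro k _
  rcases lt_trichotomy (k : ℕ) K with h | h | h
  · simp only [if_pos h]
    have hdk : dd k ≤ dd ⟨K, hKN⟩ := hmono (by simpa [Fin.le_def] using h.le)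
    nlinarith [h1 k h]
  · simp only [if_neg (by omega : ¬ (k:ℕ) < K)]
    have : dd k = dd ⟨K, hKN⟩ := by congr 1; exact Fin.ext h
    rw [this]; nlinarith
  · simp only [if_neg (by omega : ¬ (k:ℕ) < K)]
    have hdk : dd ⟨K, hKN⟩ ≤ dd k := hmono (by simpa [Fin.le_def] using h.le)
    nlinarith [h2 k h]

set_option maxHeartbeats 3000000 in

/-- First case of the proof of Theorem 2: the water-filling transport `γ*` at level `s*`
beats any feasible transport `γ'` whose density-weighted entries on the `K_i` nearest
neighbors are all at most `1/(M·s*)`. -/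
theorem stmt_11 (M N : ℕ) (hM : 1 ≤ M) (hN : 1 ≤ N)
    (d : Fin M → Fin N → ℝ) (hd : ∀ i j, 0 ≤ d i j)
    (C α : ℝ) (hC : 0 < C) (hα0 : 0 ≤ α) (hα1 : α < 1)
    (σ : Fin M → Equiv.Perm (Fin N))
    (hsort : ∀ i, Monotone fun k => d i (σ i k))
    (ρ : Fin N → ℝ) (hρ : ∀ j, 0 < ρ j)
    (sbar : ℝ) (hsbar : sbar = ∑ j, 1 / ρ j)
    -- `D i l` / `R i l` : sorted distances and inverse densities (0-indexed position `l`)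
    (D : Fin M → ℕ → ℝ) (hD : ∀ i (l : Fin N), D i (l : ℕ) = d i (σ i l))
    (R : Fin M → ℕ → ℝ) (hR : ∀ i (l : Fin N), R i (l : ℕ) = 1 / ρ (σ i l))
    -- `S i k` is the paper's `s_k^i`
    (S : Fin M → ℕ → ℝ) (hS : ∀ i k, k ≤ N → S i k = ∑ l ∈ Finset.range k, R i l)
    -- the step functions `c_i` and their sum `c`
    (ci : Fin M → ℝ → ℝ)
    (hci0 : ∀ i (s : ℝ), s ≤ S i 1 → ci i s = 0)
    (hci : ∀ i (s : ℝ) (k : ℕ), 2 ≤ k → k ≤ N → S i (k - 1) < s → s ≤ S i k →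
      ci i s = ∑ l ∈ Finset.range (k - 1), (D i (k - 1) - D i l) * R i l)
    (c : ℝ → ℝ) (hc : ∀ s, c s = ∑ i, ci i s)
    -- the finite set `𝒮`
    (Scal : Set ℝ)
    (hScal : Scal = insert (0 : ℝ) {x : ℝ | ∃ i : Fin M, ∃ k, 1 ≤ k ∧ k ≤ N ∧ x = S i k})
    -- `s*` is the largest `s ∈ 𝒮` with `(α/C)·c(s) < (1-α)·M`
    (sstar : ℝ) (hsstar1 : sstar ∈ Scal)
    (hsstar2 : (α / C) * c sstar < (1 - α) * (M : ℝ))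
    (hsstar3 : ∀ s ∈ Scal, (α / C) * c s < (1 - α) * (M : ℝ) → s ≤ sstar)
    -- `K_i = max {k ∈ {0,…,N−1} : s_k^i ≤ s*}`
    (Ki : Fin M → ℕ)
    (hKi1 : ∀ i, Ki i ≤ N - 1)
    (hKi2 : ∀ i, S i (Ki i) ≤ sstar)
    (hKi3 : ∀ i k, k ≤ N - 1 → S i k ≤ sstar → k ≤ Ki i)
    -- the water-filling transport `γ*`
    (γstar : Fin M → Fin N → ℝ)
    (hγstar : ∀ i (k : Fin N), γstar i (σ i k) =
      if (k : ℕ) < Ki i then 1 / ((M : ℝ) * sstar * ρ (σ i k))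
      else if (k : ℕ) = Ki i then
        1 / (M : ℝ) - ∑ l ∈ Finset.range (Ki i), R i l / ((M : ℝ) * sstar)
      else 0)
    -- the objective with regularizer `G_KDE`
    (L : (Fin M → Fin N → ℝ) → ℝ)
    (hL : ∀ γ, L γ = (α / C) * (∑ i, ∑ j, γ i j * d i j)
      + (1 - α) * ((M : ℝ) * ⨆ i, ⨆ j, ρ j * |γ i j - (1 / ρ j) / ((M : ℝ) * sbar)|))
    -- the assumption `s* ≤ s̄/2`
    (hshalf : sstar ≤ sbar / 2)
    -- `γ'` is feasible with density-weighted entries at most `1/(M·s*)` on the `K_i`-neighborhoods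
    (γ' : Fin M → Fin N → ℝ)
    (hγ'1 : ∀ i j, 0 ≤ γ' i j) (hγ'2 : ∀ i, ∑ j, γ' i j = 1 / (M : ℝ))
    (hγ'3 : ∀ i (k : Fin N), (k : ℕ) < Ki i →
      ρ (σ i k) * γ' i (σ i k) ≤ 1 / ((M : ℝ) * sstar)) :
    L γstar ≤ L γ' := by
  haveI : NeZero M := ⟨by omega⟩
  haveI : NeZero N := ⟨by omega⟩
  have hM0 : (0:ℝ) < M := by exact_mod_cast (hM : 0 < M)
  have hρ' : ∀ j, (ρ j : ℝ) ≠ 0 := fun j => ne_of_gt (hρ j)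
  have hsbar0 : 0 < sbar := by
    rw [hsbar]
    exact Finset.sum_pos (fun j _ => one_div_pos.mpr (hρ j)) ⟨⟨0, hN⟩, mem_univ _⟩
  have hKiN : ∀ i, Ki i < N := fun i => by have := hKi1 i; omega
  have hRposN : ∀ i (l : ℕ), l < N → 0 < R i l := by
    intro i l hl
    have := hR i ⟨l, hl⟩
    simp only at this
    rw [this]
    exact one_div_pos.mpr (hρ _)
  -- s* > 0
  have hsstar0 : 0 < sstar := by
    obtain ⟨i0, -, hmin⟩ := Finset.exists_min_image Finset.univ (fun i => S i 1) ⟨⟨0, hM⟩, mem_univ _⟩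
    have hS1 : ∀ i, S i 1 = R i 0 := by
      intro i
      rw [hS i 1 hN, Finset.sum_range_one]
    have hpos : 0 < S i0 1 := by rw [hS1]; exact hRposN i0 0 hN
    have hmem : S i0 1 ∈ Scal := by
      rw [hScal]; right; exact ⟨i0, 1, le_refl 1, hN, rfl⟩
    have hcz : c (S i0 1) = 0 := by
      rw [hc]
      apply Finset.sum_eq_zero
      intro i _
      exact hci0 i _ (hmin i (mem_univ i))
    have := hsstar3 _ hmem (by rw [hcz]; rw [mul_zero]; nlinarith)
    linarith
  have hMs0 : (0:ℝ) < (M:ℝ) * sstar := by positivity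
  have hMne : ((M:ℝ)) ≠ 0 := ne_of_gt hM0
  have hsne : sstar ≠ 0 := ne_of_gt hsstar0
  have hMb0 : (0:ℝ) < (M:ℝ) * sbar := by positivity
  have hbne : sbar ≠ 0 := ne_of_gt hsbar0
  -- sbar = S i N
  have hSN : ∀ i, S i N = sbar := by
    intro i
    rw [hS i N le_rfl, hsbar]
    rw [← Fin.sum_univ_eq_sum_range (fun l => R i l) N]
    rw [Finset.sum_congr rfl (fun l _ => hR i l)]
    exact Equiv.sum_comp (σ i) (fun j => 1 / ρ j)
  -- next breakpoint strictly above s*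
  have hnext : ∀ i, sstar < S i (Ki i + 1) := by
    intro i
    by_cases h : Ki i + 1 ≤ N - 1
    · by_contra hcon
      push_neg at hcon
      have := hKi3 i (Ki i + 1) h hcon
      omega
    · have hKN : Ki i + 1 = N := by have := hKi1 i; omega
      rw [hKN, hSN i]
      linarith
  obtain ⟨i1, -, hmin1⟩ := Finset.exists_min_image Finset.univ (fun i => S i (Ki i + 1)) ⟨⟨0, hM⟩, mem_univ _⟩
  set splus := S i1 (Ki i1 + 1) with hsplus_def
  have hsplus_gt : sstar < splus := hnext i1
  have hsplus_le : ∀ i, splus ≤ S i (Ki i + 1) := fun i => hmin1 i (mem_univ i)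
  have hsplus_mem : splus ∈ Scal := by
    rw [hScal]; right
    exact ⟨i1, Ki i1 + 1, by omega, by have := hKi1 i1; omega, rfl⟩
  have hplus : (1 - α) * (M : ℝ) ≤ (α / C) * c splus := by
    by_contra h
    push_neg at h
    have := hsstar3 _ hsplus_mem h
    linarith
  -- value of c at splus
  have hcval : ∀ i, ci i splus = ∑ l ∈ Finset.range (Ki i), (D i (Ki i) - D i l) * R i l := by
    intro i
    by_cases h : Ki i = 0
    · rw [h]
      simp only [Finset.range_zero, Finset.sum_empty]
      apply hci0
      have := hsplus_le i
      rw [h] at this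
      exact this
    · have h2 : 2 ≤ Ki i + 1 := by omega
      have h3 : Ki i + 1 ≤ N := by have := hKiN i; omega
      have heq := hci i splus (Ki i + 1) h2 h3
        (by simpa using lt_of_le_of_lt (hKi2 i) hsplus_gt) (hsplus_le i)
      simpa using heq
  have hαpos : 0 < α := by
    rcases lt_or_eq_of_le hα0 with h | h
    · exact h
    · exfalso
      rw [← h] at hplus
      simp at hplus
      nlinarith
  -- the target levels
  set astar : ℝ := 1 / ((M:ℝ) * sstar) - 1 / ((M:ℝ) * sbar) with hastar
  clear_value astar
  have hastar_half : 1 / ((M:ℝ) * sbar) ≤ astar := by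
    rw [hastar]
    have h2 : 2 / ((M:ℝ) * sbar) ≤ 1 / ((M:ℝ) * sstar) := by
      rw [div_le_div_iff₀ hMb0 hMs0]
      nlinarith
    have h3 : 2 / ((M:ℝ) * sbar) = 1 / ((M:ℝ) * sbar) + 1 / ((M:ℝ) * sbar) := by ring
    linarith
  have hastar_nonneg : 0 ≤ astar := le_trans (le_of_lt (one_div_pos.mpr hMb0)) hastar_half
  -- γstar entries deviate from the KDE by at most astar
  have hγs_bound : ∀ i (j : Fin N),
      ρ j * |γstar i j - (1 / ρ j) / ((M : ℝ) * sbar)| ≤ astar := by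
    intro i j
    obtain ⟨k, rfl⟩ : ∃ k, σ i k = j := ⟨(σ i).symm j, Equiv.apply_symm_apply _ _⟩
    rw [hγstar i k]
    rcases lt_trichotomy (k : ℕ) (Ki i) with h | h | h
    · rw [if_pos h]
      have e : 1 / ((M:ℝ) * sstar * ρ (σ i k)) - (1 / ρ (σ i k)) / ((M:ℝ) * sbar)
          = astar / ρ (σ i k) := by
        rw [hastar]; field_simp [hρ' (σ i k)]
      rw [e, abs_div, abs_of_pos (hρ (σ i k)), mul_comm, div_mul_cancel₀ _ (hρ' (σ i k)),
        abs_of_nonneg hastar_nonneg]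
    · rw [if_neg (by omega), if_pos h]
      have hsumS : ∑ l ∈ Finset.range (Ki i), R i l / ((M:ℝ) * sstar)
          = S i (Ki i) / ((M:ℝ) * sstar) := by
        rw [hS i (Ki i) (hKiN i).le, Finset.sum_div]
      have hres0 : 0 ≤ 1/(M:ℝ) - ∑ l ∈ Finset.range (Ki i), R i l / ((M:ℝ) * sstar) := by
        rw [hsumS]
        have h1 : S i (Ki i) / ((M:ℝ)*sstar) ≤ sstar / ((M:ℝ)*sstar) :=
          (div_le_div_iff_of_pos_right hMs0).mpr (hKi2 i)
        have h2 : sstar / ((M:ℝ)*sstar) = 1/(M:ℝ) := by field_simp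
        linarith
      have hresup : 1/(M:ℝ) - ∑ l ∈ Finset.range (Ki i), R i l / ((M:ℝ) * sstar)
          ≤ (1 / ρ (σ i k)) / ((M:ℝ) * sstar) := by
        have hRk : R i (Ki i) = 1 / ρ (σ i k) := by rw [← h]; exact hR i k
        have hS1 : S i (Ki i + 1) = S i (Ki i) + R i (Ki i) := by
          rw [hS i (Ki i + 1) (by have := hKiN i; omega), hS i (Ki i) (hKiN i).le,
            Finset.sum_range_succ]
        have h3 : sstar ≤ S i (Ki i) + R i (Ki i) := by
          have := hnext i; rw [hS1] at this; linarith
        rw [hsumS, ← hRk]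
        have h4 : sstar / ((M:ℝ)*sstar) ≤ (S i (Ki i) + R i (Ki i)) / ((M:ℝ)*sstar) :=
          (div_le_div_iff_of_pos_right hMs0).mpr h3
        have h5 : sstar / ((M:ℝ)*sstar) = 1/(M:ℝ) := by field_simp
        rw [add_div] at h4
        linarith
      set resid := 1/(M:ℝ) - ∑ l ∈ Finset.range (Ki i), R i l / ((M:ℝ) * sstar) with hresid
      clear_value resid
      have h6 : ρ (σ i k) * ((1/ρ (σ i k))/((M:ℝ)*sbar)) = 1/((M:ℝ)*sbar) := by
        field_simp [hρ' (σ i k)]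
      have key : |ρ (σ i k) * (resid - (1/ρ (σ i k))/((M:ℝ)*sbar))| ≤ astar := by
        rw [abs_le]
        constructor
        · have h7 : 0 ≤ ρ (σ i k) * resid := mul_nonneg (hρ _).le hres0
          rw [mul_sub, h6]
          linarith [h7, hastar_half]
        · have h7 : ρ (σ i k) * resid ≤ 1/((M:ℝ)*sstar) := by
            calc ρ (σ i k) * resid ≤ ρ (σ i k) * ((1/ρ (σ i k))/((M:ℝ)*sstar)) :=
                  mul_le_mul_of_nonneg_left hresup (hρ _).le
              _ = 1/((M:ℝ)*sstar) := by field_simp [hρ' (σ i k)]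
          rw [mul_sub, h6, hastar]
          linarith
      calc ρ (σ i k) * |resid - (1/ρ (σ i k))/((M:ℝ)*sbar)|
          = |ρ (σ i k) * (resid - (1/ρ (σ i k))/((M:ℝ)*sbar))| := by
            rw [abs_mul, abs_of_pos (hρ _)]
        _ ≤ astar := key
    · rw [if_neg (by omega), if_neg (by omega)]
      have h8 : |(0:ℝ) - (1/ρ (σ i k))/((M:ℝ)*sbar)| = (1/ρ (σ i k))/((M:ℝ)*sbar) := by
        rw [zero_sub, abs_neg, abs_of_nonneg
          (le_of_lt (div_pos (one_div_pos.mpr (hρ _)) hMb0))]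
      rw [h8]
      have h6 : ρ (σ i k) * ((1/ρ (σ i k))/((M:ℝ)*sbar)) = 1/((M:ℝ)*sbar) := by
        field_simp [hρ' (σ i k)]
      rw [h6]
      exact hastar_half
  haveI : Nonempty (Fin M) := ⟨⟨0, hM⟩⟩
  haveI : Nonempty (Fin N) := ⟨⟨0, hN⟩⟩
  -- supremum facts
  have hGs_le : (⨆ i, ⨆ j, ρ j * |γstar i j - (1 / ρ j) / ((M : ℝ) * sbar)|) ≤ astar :=
    ciSup_le fun i => ciSup_le fun j => hγs_bound i j
  set Gp := ⨆ i, ⨆ j, ρ j * |γ' i j - (1 / ρ j) / ((M : ℝ) * sbar)| with hGpdef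
  have hGp_ub : ∀ i j, ρ j * |γ' i j - (1 / ρ j) / ((M : ℝ) * sbar)| ≤ Gp := by
    intro i j
    rw [hGpdef]
    refine le_trans (le_ciSup (f := fun j => ρ j * |γ' i j - (1 / ρ j) / ((M : ℝ) * sbar)|)
      (Set.Finite.bddAbove (Set.finite_range _)) j) ?_
    exact le_ciSup (f := fun i => ⨆ j, ρ j * |γ' i j - (1 / ρ j) / ((M : ℝ) * sbar)|)
      (Set.Finite.bddAbove (Set.finite_range _)) i
  clear_value Gp
  set εv := max (astar - Gp) 0 with hεv
  have hεv0 : 0 ≤ εv := le_max_right _ _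
  clear_value εv
  -- row sums of γstar
  have hγs_sum : ∀ i, ∑ k : Fin N, γstar i (σ i k) = 1/(M:ℝ) := by
    intro i
    have hbody : ∀ k : Fin N, γstar i (σ i k) =
        (fun l : ℕ => if l < Ki i then R i l / ((M:ℝ)*sstar)
          else if l = Ki i then
            1/(M:ℝ) - ∑ l ∈ Finset.range (Ki i), R i l / ((M:ℝ)*sstar)
          else 0) (k : ℕ) := by
      intro k
      rw [hγstar i k]
      simp only
      split_ifs with h1 h2
      · rw [hR i k]
        field_simp [hρ' (σ i k)]
      · rfl
      · rfl
    rw [Finset.sum_congr rfl (fun k _ => hbody k),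
      Fin.sum_univ_eq_sum_range (fun l : ℕ => if l < Ki i then R i l / ((M:ℝ)*sstar)
        else if l = Ki i then
          1/(M:ℝ) - ∑ l ∈ Finset.range (Ki i), R i l / ((M:ℝ)*sstar)
        else 0) N]
    have hsplit : ∀ l ∈ Finset.range N,
        (if l < Ki i then R i l / ((M:ℝ)*sstar)
          else if l = Ki i then
            1/(M:ℝ) - ∑ l ∈ Finset.range (Ki i), R i l / ((M:ℝ)*sstar)
          else 0)
        = (if l < Ki i then R i l / ((M:ℝ)*sstar) else 0)
          + (if l = Ki i then
              1/(M:ℝ) - ∑ l ∈ Finset.range (Ki i), R i l / ((M:ℝ)*sstar) else 0) := by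
      intro l _
      by_cases h1 : l < Ki i
      · rw [if_pos h1, if_pos h1, if_neg (by omega), add_zero]
      · rw [if_neg h1, if_neg h1, zero_add]
    rw [Finset.sum_congr rfl hsplit, Finset.sum_add_distrib,
      sum_ite_lt_range N (Ki i) (hKiN i).le,
      Finset.sum_ite_eq' (Finset.range N) (Ki i)]
    rw [if_pos (Finset.mem_range.mpr (hKiN i))]
    ring
  -- per-row transport bound
  have hrow : ∀ i, εv * ci i splus
      ≤ ∑ k : Fin N, (γ' i (σ i k) - γstar i (σ i k)) * D i (k:ℕ) := by
    intro i
    have hmono : Monotone (fun k : Fin N => D i (k:ℕ)) := by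
      intro a b hab
      simp only
      rw [hD i a, hD i b]
      exact hsort i hab
    have hsum0 : ∑ k : Fin N, (γ' i (σ i k) - γstar i (σ i k)) = 0 := by
      rw [Finset.sum_sub_distrib, Equiv.sum_comp (σ i) (γ' i), hγ'2 i, hγs_sum i]
      ring
    have h1 : ∀ k : Fin N, (k:ℕ) < Ki i →
        γ' i (σ i k) - γstar i (σ i k) ≤ -(εv * R i (k:ℕ)) := by
      intro k hk
      have hRk : R i (k:ℕ) = 1/ρ (σ i k) := hR i k
      have hγsv : γstar i (σ i k) = 1/((M:ℝ)*sstar*ρ (σ i k)) := by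
        rw [hγstar i k, if_pos hk]
      have hb1 : γ' i (σ i k) ≤ γstar i (σ i k) := by
        have h3 := hγ'3 i k hk
        rw [hγsv]
        have h4 : γ' i (σ i k) ≤ (1/((M:ℝ)*sstar))/(ρ (σ i k)) := by
          rw [le_div_iff₀ (hρ _)]
          linarith
        rw [div_div] at h4
        exact h4
      have hb2 : γ' i (σ i k) ≤ γstar i (σ i k) - (astar - Gp) * R i (k:ℕ) := by
        have ht := hGp_ub i (σ i k)
        have h9 : γ' i (σ i k) - (1/ρ (σ i k))/((M:ℝ)*sbar) ≤ Gp / ρ (σ i k) := by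
          rw [le_div_iff₀ (hρ _)]
          have := le_abs_self (γ' i (σ i k) - (1/ρ (σ i k))/((M:ℝ)*sbar))
          nlinarith [abs_nonneg (γ' i (σ i k) - (1/ρ (σ i k))/((M:ℝ)*sbar)), hρ (σ i k)]
        rw [hγsv, hRk, hastar]
        have heq : 1/((M:ℝ)*sstar*ρ (σ i k))
            - (1/((M:ℝ)*sstar) - 1/((M:ℝ)*sbar) - Gp) * (1/ρ (σ i k))
            = Gp / ρ (σ i k) + (1/ρ (σ i k))/((M:ℝ)*sbar) := by
          field_simp [hρ' (σ i k)]
          ring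
        rw [heq]
        linarith
      rcases le_total (astar - Gp) 0 with hc | hc
      · rw [hεv, max_eq_right hc, zero_mul, neg_zero]
        linarith
      · rw [hεv, max_eq_left hc]
        have hRpos := hRposN i (k:ℕ) (lt_trans hk (hKiN i))
        linarith
    have h2 : ∀ k : Fin N, Ki i < (k:ℕ) →
        0 ≤ γ' i (σ i k) - γstar i (σ i k) := by
      intro k hk
      rw [hγstar i k, if_neg (by omega), if_neg (by omega), sub_zero]
      exact hγ'1 i (σ i k)
    have hrb := row_bound N (Ki i) (hKiN i) (fun k => D i (k:ℕ))
      (fun k => γ' i (σ i k) - γstar i (σ i k)) (fun k => εv * R i (k:ℕ)) hmono hsum0 h1 h2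
    have hconv : ∑ l ∈ Finset.range N,
        (if l < Ki i then εv * R i l * (D i (Ki i) - D i l) else 0) = εv * ci i splus := by
      rw [sum_ite_lt_range N (Ki i) (hKiN i).le, hcval i, Finset.mul_sum]
      exact Finset.sum_congr rfl fun l _ => by ring
    calc εv * ci i splus
        = ∑ l ∈ Finset.range N,
            (if l < Ki i then εv * R i l * (D i (Ki i) - D i l) else 0) := hconv.symm
      _ = ∑ k : Fin N, (if (k:ℕ) < Ki i then εv * R i (k:ℕ) * (D i (Ki i) - D i (k:ℕ)) else 0) :=
          (Fin.sum_univ_eq_sum_range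
            (fun l : ℕ => if l < Ki i then εv * R i l * (D i (Ki i) - D i l) else 0) N).symm
      _ ≤ ∑ k : Fin N, (γ' i (σ i k) - γstar i (σ i k)) * D i (k:ℕ) := hrb
  -- total transport bound
  have hT : εv * c splus
      ≤ (∑ i, ∑ j, γ' i j * d i j) - (∑ i, ∑ j, γstar i j * d i j) := by
    have hre : ∀ (γ : Fin M → Fin N → ℝ) (i : Fin M),
        ∑ j, γ i j * d i j = ∑ k : Fin N, γ i (σ i k) * D i (k:ℕ) := by
      intro γ i
      rw [← Equiv.sum_comp (σ i) (fun j => γ i j * d i j)]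
      exact Finset.sum_congr rfl fun k _ => by rw [hD i k]
    rw [hc]
    calc εv * ∑ i, ci i splus = ∑ i, εv * ci i splus := Finset.mul_sum _ _ _
      _ ≤ ∑ i, ∑ k : Fin N, (γ' i (σ i k) - γstar i (σ i k)) * D i (k:ℕ) :=
          Finset.sum_le_sum (fun i _ => hrow i)
      _ = _ := by
          rw [← Finset.sum_sub_distrib]
          refine Finset.sum_congr rfl fun i _ => ?_
          rw [hre γ' i, hre γstar i, ← Finset.sum_sub_distrib]
          exact Finset.sum_congr rfl fun k _ => by ring
  -- final assembly
  rw [hL, hL, ← hGpdef]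
  rcases le_total astar Gp with hcase | hcase
  · have hεz : εv = 0 := by rw [hεv]; exact max_eq_right (by linarith)
    rw [hεz, zero_mul] at hT
    have h1 : (α/C) * (∑ i, ∑ j, γstar i j * d i j) ≤ (α/C) * (∑ i, ∑ j, γ' i j * d i j) :=
      mul_le_mul_of_nonneg_left (by linarith) (div_nonneg hα0 hC.le)
    have h2 : (⨆ i, ⨆ j, ρ j * |γstar i j - (1 / ρ j) / ((M : ℝ) * sbar)|) ≤ Gp :=
      le_trans hGs_le hcase
    have h3 : (1-α) * ((M:ℝ) * (⨆ i, ⨆ j, ρ j * |γstar i j - (1 / ρ j) / ((M : ℝ) * sbar)|))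
        ≤ (1-α) * ((M:ℝ) * Gp) := by
      apply mul_le_mul_of_nonneg_left _ (by linarith : (0:ℝ) ≤ 1 - α)
      exact mul_le_mul_of_nonneg_left h2 hM0.le
    linarith [h1, h3]
  · have hεe : εv = astar - Gp := by rw [hεv]; exact max_eq_left (by linarith)
    have hαC : 0 < α / C := div_pos hαpos hC
    have k1 : εv * ((1-α)*(M:ℝ)) ≤ εv * ((α/C) * c splus) :=
      mul_le_mul_of_nonneg_left hplus hεv0
    have k2 : (α/C) * (εv * c splus)
        ≤ (α/C) * ((∑ i, ∑ j, γ' i j * d i j) - (∑ i, ∑ j, γstar i j * d i j)) :=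
      mul_le_mul_of_nonneg_left hT hαC.le
    have k4 : (astar - Gp) * ((1-α)*(M:ℝ))
        ≤ (α/C) * ((∑ i, ∑ j, γ' i j * d i j) - (∑ i, ∑ j, γstar i j * d i j)) := by
      calc (astar - Gp) * ((1-α)*(M:ℝ)) = εv * ((1-α)*(M:ℝ)) := by rw [hεe]
        _ ≤ εv * ((α/C) * c splus) := k1
        _ = (α/C) * (εv * c splus) := by ring
        _ ≤ _ := k2
    have k3 : (⨆ i, ⨆ j, ρ j * |γstar i j - (1 / ρ j) / ((M : ℝ) * sbar)|) ≤ astar := hGs_le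
    have h3 : (1-α) * ((M:ℝ) * (⨆ i, ⨆ j, ρ j * |γstar i j - (1 / ρ j) / ((M : ℝ) * sbar)|))
        ≤ (1-α) * ((M:ℝ) * astar) := by
      apply mul_le_mul_of_nonneg_left _ (by linarith : (0:ℝ) ≤ 1 - α)
      exact mul_le_mul_of_nonneg_left k3 hM0.le
    nlinarith [k4, h3]
end
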